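/- arXiv:1910.05753 — 6 statements merged into one kernel-verified Lean document; each statement's English description precedes it below -/
import Mathlib

section
/- Let Γ be a numerical semigroup with conductor c and let R be a closed ℂ-subalgebra of ℂ[[t]] with semigroup Γ_R = Γ. Then (1) t^c·ℂ[[t]] ⊆ R, i.e. every power series of order ≥ c lies in R; and (2) for every f ∈ ℂ[[t]], one has f·g ∈ R for all g ∈ ℂ[[t]] if and only if f ∈ t^c·ℂ[[t]]; that is, the conductor ideal {f ∈ R : f·ℂ[[t]] ⊆ R} equals the ideal t^c·ℂ[[t]]. -/
noncomputable section

/-- `f ∈ ℂ[[t]]` has order exactly `n`: the coefficient of `t^n` is nonzero and all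
lower coefficients vanish. -/
def HasOrder (f : PowerSeries ℂ) (n : ℕ) : Prop :=
  PowerSeries.coeff n f ≠ 0 ∧ ∀ m < n, PowerSeries.coeff m f = 0

/-- The semigroup of orders of (nonzero) elements of a set `S ⊆ ℂ[[t]]`. -/
def sgp (S : Set (PowerSeries ℂ)) : Set ℕ :=
  {n | ∃ f ∈ S, HasOrder f n}

/-- A `ℂ`-subalgebra `R ⊆ ℂ[[t]]` is closed if every `f` which is approximated to
arbitrary order by elements of `R` lies in `R`. -/
def IsClosedSubalg (R : Subalgebra ℂ (PowerSeries ℂ)) : Prop :=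
  ∀ f : PowerSeries ℂ,
    (∀ N : ℕ, ∃ g ∈ R, ∀ m < N, PowerSeries.coeff m (f - g) = 0) → f ∈ R

/-- The set `⟨x₀,…,x_{k-1}⟩ + t^c·ℂ[[t]] = {p(x₀,…,x_{k-1}) + h}`. -/
def adjSet {k : ℕ} (x : Fin k → PowerSeries ℂ) (c : ℕ) : Set (PowerSeries ℂ) :=
  {f | ∃ (p : MvPolynomial (Fin k) ℂ) (h : PowerSeries ℂ),
    f = MvPolynomial.aeval x p + (PowerSeries.X : PowerSeries ℂ) ^ c * h}

/-- `c` is the conductor of `Γ`: the least natural number such that all `n ≥ c` lie in `Γ`. -/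
def IsConductor (Γ : AddSubmonoid ℕ) (c : ℕ) : Prop :=
  (∀ n, c ≤ n → n ∈ Γ) ∧ ∀ c' < c, ∃ n, c' ≤ n ∧ n ∉ Γ

/-- `v 0 < v 1 < ⋯` minimally generates `Γ`. -/
def MinGen (Γ : AddSubmonoid ℕ) {k : ℕ} (v : Fin k → ℕ) : Prop :=
  StrictMono v ∧ AddSubmonoid.closure (Set.range v) = Γ ∧
    ∀ s : Set ℕ, s ⊂ Set.range v → AddSubmonoid.closure s ≠ Γ

/-- `(x 0, …, x (k-1))` is in normal form with respect to `Γ` (with generators `v`):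
the coefficient of `t^(v i)` in `x i` is `1`, and every other nonzero coefficient occurs
at an exponent which is a gap of `Γ` greater than `v i`. -/
def NormalFormT (Γ : AddSubmonoid ℕ) {k : ℕ} (v : Fin k → ℕ)
    (x : Fin k → PowerSeries ℂ) : Prop :=
  ∀ i, PowerSeries.coeff (v i) (x i) = 1 ∧
    ∀ m, m ≠ v i → PowerSeries.coeff m (x i) ≠ 0 → m ∉ Γ ∧ v i < m

/-- if `Γ` is a numerical semigroup with conductor `c` and `R` is a closed
`ℂ`-subalgebra of `ℂ[[t]]` with semigroup `Γ`, then `t^c·ℂ[[t]] ⊆ R`, and the conductor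
ideal `{f ∈ R : f·ℂ[[t]] ⊆ R}` equals `t^c·ℂ[[t]]`. -/
theorem stmt0 (Γ : AddSubmonoid ℕ) (hfin : ((Γ : Set ℕ))ᶜ.Finite)
    (c : ℕ) (hc : IsConductor Γ c)
    (R : Subalgebra ℂ (PowerSeries ℂ)) (hcl : IsClosedSubalg R)
    (hsem : sgp (R : Set (PowerSeries ℂ)) = (Γ : Set ℕ)) :
    (∀ f : PowerSeries ℂ,
      (∃ h : PowerSeries ℂ, f = (PowerSeries.X : PowerSeries ℂ) ^ c * h) → f ∈ R) ∧
    (∀ f : PowerSeries ℂ, (∀ g : PowerSeries ℂ, f * g ∈ R) ↔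
      ∃ h : PowerSeries ℂ, f = (PowerSeries.X : PowerSeries ℂ) ^ c * h) ∧
    {f : PowerSeries ℂ | f ∈ R ∧ ∀ g : PowerSeries ℂ, f * g ∈ R} =
      {f : PowerSeries ℂ | ∃ h : PowerSeries ℂ, f = (PowerSeries.X : PowerSeries ℂ) ^ c * h} := by
  -- Part 1: every series of order ≥ c lies in R.
  have part1 : ∀ f : PowerSeries ℂ,
      (∃ h : PowerSeries ℂ, f = (PowerSeries.X : PowerSeries ℂ) ^ c * h) → f ∈ R := by
    intro f hf
    obtain ⟨h, rfl⟩ := hf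
    have hlow : ∀ m < c, PowerSeries.coeff m ((PowerSeries.X : PowerSeries ℂ) ^ c * h) = 0 := by
      intro m hm
      have : (PowerSeries.X : PowerSeries ℂ) ^ c ∣ (PowerSeries.X : PowerSeries ℂ) ^ c * h :=
        Dvd.intro h rfl
      exact (PowerSeries.X_pow_dvd_iff.mp this) m hm
    set f := (PowerSeries.X : PowerSeries ℂ) ^ c * h with hfdef
    -- approximation by induction
    have key : ∀ N : ℕ, ∃ g ∈ R, ∀ m < c + N, PowerSeries.coeff m (f - g) = 0 := by
      intro N
      induction N with
      | zero =>
        refine ⟨0, R.zero_mem, ?_⟩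
        intro m hm
        simpa using hlow m (by omega)
      | succ N ih =>
        obtain ⟨g, hgR, hg⟩ := ih
        have hmem : (c + N) ∈ (Γ : Set ℕ) := hc.1 _ (by omega)
        rw [← hsem] at hmem
        obtain ⟨p, hpR, hpo⟩ := hmem
        set a := PowerSeries.coeff (c + N) (f - g) with ha
        set b := PowerSeries.coeff (c + N) p with hb
        have hbne : b ≠ 0 := hpo.1
        refine ⟨g + (a / b) • p, R.add_mem hgR (R.smul_mem hpR _), ?_⟩
        intro m hm
        have hc1 : PowerSeries.coeff m (f - (g + (a / b) • p)) =
            PowerSeries.coeff m (f - g) - (a / b) * PowerSeries.coeff m p := by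
          simp [sub_add_eq_sub_sub, map_sub]
        rw [hc1]
        rcases lt_or_eq_of_le (Nat.lt_succ_iff.mp (by omega : m < (c + N) + 1)) with hlt | heq
        · rw [hg m hlt, hpo.2 m hlt, mul_zero, sub_zero]
        · subst heq
          rw [← ha, ← hb, div_mul_cancel₀ a hbne, sub_self]
    apply hcl
    intro N
    obtain ⟨g, hgR, hg⟩ := key N
    exact ⟨g, hgR, fun m hm => hg m (by omega)⟩
  have part2 : ∀ f : PowerSeries ℂ, (∀ g : PowerSeries ℂ, f * g ∈ R) ↔
      ∃ h : PowerSeries ℂ, f = (PowerSeries.X : PowerSeries ℂ) ^ c * h := by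
    intro f
    constructor
    · intro hfg
      show (PowerSeries.X : PowerSeries ℂ) ^ c ∣ f
      by_contra hnd
      rw [PowerSeries.X_pow_dvd_iff] at hnd
      push_neg at hnd
      -- there is a minimal n with coeff n f ≠ 0
      have hex : ∃ n, PowerSeries.coeff n f ≠ 0 := by
        obtain ⟨m, _, hm⟩ := hnd
        exact ⟨m, hm⟩
      classical
      let n := Nat.find hex
      have hnne : PowerSeries.coeff n f ≠ 0 := Nat.find_spec hex
      have hnmin : ∀ m < n, PowerSeries.coeff m f = 0 := by
        intro m hm
        by_contra hmm
        exact absurd (Nat.find_min' hex hmm) (not_le.mpr hm)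
      have hnc : n < c := by
        obtain ⟨m, hmc, hm⟩ := hnd
        exact lt_of_le_of_lt (Nat.find_min' hex hm) hmc
      obtain ⟨m, hnm, hmΓ⟩ := hc.2 n hnc
      apply hmΓ
      have : m ∈ sgp (R : Set (PowerSeries ℂ)) := by
        refine ⟨f * (PowerSeries.X : PowerSeries ℂ) ^ (m - n), hfg _, ?_, ?_⟩
        · rw [PowerSeries.coeff_mul_X_pow' f (m - n) m]
          simp only [Nat.sub_le m n, if_true]
          rw [Nat.sub_sub_self hnm]
          exact hnne
        · intro j hj
          rw [PowerSeries.coeff_mul_X_pow' f (m - n) j]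
          split_ifs with hle
          · exact hnmin _ (by omega)
          · rfl
      rw [hsem] at this
      exact this
    · rintro ⟨h, rfl⟩ g
      exact part1 _ ⟨h * g, by ring⟩
  refine ⟨part1, part2, ?_⟩
  ext f
  simp only [Set.mem_setOf_eq]
  constructor
  · rintro ⟨_, hfg⟩
    exact (part2 f).mp hfg
  · intro hf
    exact ⟨by simpa using (part2 f).mpr hf 1, (part2 f).mpr hf⟩
end
end

section
/- Let Γ be a numerical semigroup minimally generated by v₀ < ⋯ < v_g with conductor c, and let R be a closed ℂ-subalgebra of ℂ[[t]] with semigroup Γ_R = Γ. Then there exists a unique tuple (x₀,…,x_g) of elements of ℂ[[t]] in normal form with respect to Γ such that R = ⟨x₀,…,x_g⟩ + t^c·ℂ[[t]], i.e. every element of R can be written as p(x₀,…,x_g) + h with p ∈ ℂ[X₀,…,X_g] and h ∈ t^c·ℂ[[t]], and conversely all such elements lie in R. -/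
noncomputable section

/-- Monic of order `n`. -/
def Mon (f : PowerSeries ℂ) (n : ℕ) : Prop :=
  PowerSeries.coeff n f = 1 ∧ ∀ m < n, PowerSeries.coeff m f = 0

lemma Mon.mul {f g : PowerSeries ℂ} {n m : ℕ} (hf : Mon f n) (hg : Mon g m) :
    Mon (f * g) (n + m) := by
  constructor
  · rw [PowerSeries.coeff_mul, Finset.sum_eq_single (n, m)]
    · simp [hf.1, hg.1]
    · rintro ⟨a, b⟩ hab hne
      rw [Finset.HasAntidiagonal.mem_antidiagonal] at hab
      rcases lt_or_ge a n with h | h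
      · simp [hf.2 a h]
      · rcases eq_or_ne a n with rfl | hne'
        · exfalso
          apply hne
          have hbm : b = m := by omega
          subst hbm
          rfl
        · have hbm : b < m := by omega
          simp [hg.2 b hbm]
    · intro h; exact (h (by simp)).elim
  · intro k hk
    rw [PowerSeries.coeff_mul]
    apply Finset.sum_eq_zero
    rintro ⟨a, b⟩ hab
    rw [Finset.HasAntidiagonal.mem_antidiagonal] at hab
    rcases lt_or_ge a n with h | h
    · simp [hf.2 a h]
    · have hbm : b < m := by omega
      simp [hg.2 b hbm]

lemma Mon.one : Mon 1 0 :=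
  ⟨by simp, fun m hm => absurd hm (Nat.not_lt_zero m)⟩

lemma Mon.pow {f : PowerSeries ℂ} {n : ℕ} (hf : Mon f n) (a : ℕ) : Mon (f ^ a) (a * n) := by
  induction a with
  | zero => simpa using Mon.one
  | succ a ih =>
    have h2 := ih.mul hf
    rw [← pow_succ] at h2
    rw [show (a + 1) * n = a * n + n from by ring]
    exact h2

lemma Mon.prodS {k : ℕ} {x : Fin k → PowerSeries ℂ} {v : Fin k → ℕ}
    (hx : ∀ i, Mon (x i) (v i)) (a : Fin k → ℕ) (s : Finset (Fin k)) :
    Mon (∏ i ∈ s, x i ^ a i) (∑ i ∈ s, a i * v i) := by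
  classical
  induction s using Finset.induction_on with
  | empty => simpa using Mon.one
  | insert _ _ hns ih =>
    rw [Finset.prod_insert hns, Finset.sum_insert hns]
    exact ((hx _).pow _).mul ih

/-- Any order in the semigroup is achieved by a monic element. -/
lemma exists_mon (R : Subalgebra ℂ (PowerSeries ℂ)) {n : ℕ}
    (hn : n ∈ sgp (R : Set (PowerSeries ℂ))) : ∃ f ∈ R, Mon f n := by
  obtain ⟨f, hfR, hf1, hf2⟩ := hn
  refine ⟨(PowerSeries.coeff n f)⁻¹ • f, R.smul_mem hfR _, ?_, ?_⟩
  · simp [inv_mul_cancel₀ hf1]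
  · intro m hm; simp [hf2 m hm]

lemma mem_closure_range {k : ℕ} (v : Fin k → ℕ) (n : ℕ)
    (hn : n ∈ AddSubmonoid.closure (Set.range v)) :
    ∃ a : Fin k → ℕ, n = ∑ i, a i * v i := by
  classical
  let S : AddSubmonoid ℕ :=
    { carrier := {n | ∃ a : Fin k → ℕ, n = ∑ i, a i * v i}
      zero_mem' := ⟨0, by simp⟩
      add_mem' := by
        rintro p q ⟨a, rfl⟩ ⟨b, rfl⟩
        exact ⟨a + b, by simp [add_mul, Finset.sum_add_distrib]⟩ }
  have : n ∈ S := by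
    refine AddSubmonoid.closure_le.mpr ?_ hn
    rintro _ ⟨i, rfl⟩
    exact ⟨fun j => if j = i then 1 else 0, by simp⟩
  exact this

/-- Everything of order ≥ c lies in R. -/
lemma tail_mem (Γ : AddSubmonoid ℕ) (c : ℕ) (hc : IsConductor Γ c)
    (R : Subalgebra ℂ (PowerSeries ℂ)) (hcl : ∀ f : PowerSeries ℂ,
      (∀ N : ℕ, ∃ g ∈ R, ∀ m < N, PowerSeries.coeff m (f - g) = 0) → f ∈ R)
    (hsem : sgp (R : Set (PowerSeries ℂ)) = (Γ : Set ℕ))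
    (f : PowerSeries ℂ) (hf : ∀ m < c, PowerSeries.coeff m f = 0) : f ∈ R := by
  apply hcl
  intro N
  induction N with
  | zero => exact ⟨0, R.zero_mem, fun m hm => absurd hm (Nat.not_lt_zero m)⟩
  | succ N ih =>
    obtain ⟨g, hgR, hg⟩ := ih
    by_cases ha : PowerSeries.coeff N (f - g) = 0
    · refine ⟨g, hgR, fun m hm => ?_⟩
      rcases Nat.lt_succ_iff_lt_or_eq.mp hm with h | rfl
      exacts [hg m h, ha]
    · have hNΓ : N ∈ Γ := by
        by_cases hNc : c ≤ N
        · exact hc.1 N hNc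
        · have hNc' : N < c := lt_of_not_ge hNc
          have h1 : ∀ m < N, PowerSeries.coeff m g = 0 := by
            intro m hm
            have h2 := hg m hm
            have hfm : PowerSeries.coeff m f = 0 := hf m (hm.trans hNc')
            rw [map_sub, hfm, zero_sub, neg_eq_zero] at h2
            exact h2
          have h2 : PowerSeries.coeff N g ≠ 0 := by
            intro h
            apply ha
            rw [map_sub, hf N hNc', h, sub_zero]
          have : N ∈ sgp (R : Set (PowerSeries ℂ)) := ⟨g, hgR, h2, h1⟩
          rwa [hsem] at this
      obtain ⟨h, hhR, hh1, hh2⟩ := exists_mon R (by rw [hsem]; exact hNΓ)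
      refine ⟨g + PowerSeries.coeff N (f - g) • h,
        R.add_mem hgR (R.smul_mem hhR _), fun m hm => ?_⟩
      rcases Nat.lt_succ_iff_lt_or_eq.mp hm with h' | rfl
      · rw [sub_add_eq_sub_sub, map_sub, hg m h', map_smul, hh2 m h', smul_zero, sub_zero]
      · rw [sub_add_eq_sub_sub, map_sub, map_smul, hh1, smul_eq_mul, mul_one, sub_self]

lemma aeval_mem {k : ℕ} (R : Subalgebra ℂ (PowerSeries ℂ)) (x : Fin k → PowerSeries ℂ)
    (hx : ∀ i, x i ∈ R) (p : MvPolynomial (Fin k) ℂ) : MvPolynomial.aeval x p ∈ R := by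
  induction p using MvPolynomial.induction_on with
  | C a => simpa using R.algebraMap_mem a
  | add p q hp hq => simpa using R.add_mem hp hq
  | mul_X p i hp => simpa using R.mul_mem hp (hx i)

lemma reduce {k : ℕ} (Γ : AddSubmonoid ℕ) (c : ℕ)
    (v : Fin k → ℕ) (hrep : ∀ n ∈ Γ, ∃ a : Fin k → ℕ, n = ∑ i, a i * v i)
    (R : Subalgebra ℂ (PowerSeries ℂ))
    (hsem : sgp (R : Set (PowerSeries ℂ)) = (Γ : Set ℕ))
    (x : Fin k → PowerSeries ℂ) (hxR : ∀ i, x i ∈ R) (hxm : ∀ i, Mon (x i) (v i)) :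
    ∀ K d : ℕ, c - d ≤ K → ∀ f ∈ R, (∀ m < d, PowerSeries.coeff m f = 0) →
      ∃ p : MvPolynomial (Fin k) ℂ,
        ∀ m < c, PowerSeries.coeff m (f - MvPolynomial.aeval x p) = 0 := by
  intro K
  induction K with
  | zero =>
    intro d hd f hfR hf
    refine ⟨0, fun m hm => ?_⟩
    simp only [map_zero, sub_zero]
    exact hf m (by omega)
  | succ K ih =>
    intro d hd f hfR hf
    by_cases hdc : c ≤ d
    · refine ⟨0, fun m hm => ?_⟩
      simp only [map_zero, sub_zero]
      exact hf m (by omega)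
    · by_cases ha : PowerSeries.coeff d f = 0
      · refine ih (d + 1) (by omega) f hfR fun m hm => ?_
        rcases Nat.lt_succ_iff_lt_or_eq.mp hm with h | rfl
        exacts [hf m h, ha]
      · have hdΓ : d ∈ Γ := by
          have h0 : d ∈ sgp (R : Set (PowerSeries ℂ)) := ⟨f, hfR, ha, hf⟩
          rwa [hsem] at h0
        obtain ⟨a, hav⟩ := hrep d hdΓ
        set b := PowerSeries.coeff d f with hb
        set q : MvPolynomial (Fin k) ℂ := ∏ i, MvPolynomial.X i ^ a i with hq
        have hmq : Mon (MvPolynomial.aeval x q) d := by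
          have : MvPolynomial.aeval x q = ∏ i, x i ^ a i := by simp [hq]
          rw [this, hav]
          exact Mon.prodS hxm a Finset.univ
        have hf'R : f - b • MvPolynomial.aeval x q ∈ R :=
          R.sub_mem hfR (R.smul_mem (aeval_mem R x hxR q) b)
        have hcoeffs : ∀ m < d + 1,
            PowerSeries.coeff m (f - b • MvPolynomial.aeval x q) = 0 := by
          intro m hm
          rcases Nat.lt_succ_iff_lt_or_eq.mp hm with h | rfl
          · rw [map_sub, hf m h, map_smul, hmq.2 m h, smul_zero, sub_zero]
          · rw [map_sub, map_smul, hmq.1, smul_eq_mul, mul_one, ← hb, sub_self]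
        obtain ⟨p', hp'⟩ := ih (d + 1) (by omega) _ hf'R hcoeffs
        refine ⟨MvPolynomial.C b * q + p', fun m hm => ?_⟩
        have heq : MvPolynomial.aeval x (MvPolynomial.C b * q + p') =
            b • MvPolynomial.aeval x q + MvPolynomial.aeval x p' := by
          rw [map_add, map_mul, MvPolynomial.aeval_C, Algebra.smul_def]
        rw [heq, show f - (b • MvPolynomial.aeval x q + MvPolynomial.aeval x p') =
          (f - b • MvPolynomial.aeval x q) - MvPolynomial.aeval x p' from by ring]
        exact hp' m hm

lemma exists_nf (Γ : AddSubmonoid ℕ) (c : ℕ) (hc : IsConductor Γ c)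
    (R : Subalgebra ℂ (PowerSeries ℂ))
    (hcl : ∀ f : PowerSeries ℂ,
      (∀ N : ℕ, ∃ g ∈ R, ∀ m < N, PowerSeries.coeff m (f - g) = 0) → f ∈ R)
    (hsem : sgp (R : Set (PowerSeries ℂ)) = (Γ : Set ℕ)) (n : ℕ) (hn : n ∈ Γ) :
    ∃ xi, xi ∈ R ∧ Mon xi n ∧
      ∀ m, m ≠ n → PowerSeries.coeff m xi ≠ 0 → m ∉ Γ ∧ n < m := by
  obtain ⟨f, hfR, hfm⟩ := exists_mon R (by rw [hsem]; exact hn)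
  have clean : ∀ N, ∃ y ∈ R, Mon y n ∧
      ∀ m < N, n < m → m ∈ Γ → PowerSeries.coeff m y = 0 := by
    intro N
    induction N with
    | zero => exact ⟨f, hfR, hfm, fun m hm => absurd hm (Nat.not_lt_zero m)⟩
    | succ N ih =>
      obtain ⟨y, hyR, hym, hyc⟩ := ih
      by_cases H : n < N ∧ N ∈ Γ ∧ PowerSeries.coeff N y ≠ 0
      · obtain ⟨h1, h2, h3⟩ := H
        obtain ⟨h, hhR, hh⟩ := exists_mon R (by rw [hsem]; exact h2)
        refine ⟨y - PowerSeries.coeff N y • h,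
          R.sub_mem hyR (R.smul_mem hhR _), ⟨?_, ?_⟩, ?_⟩
        · rw [map_sub, map_smul, hh.2 n h1, smul_zero, sub_zero, hym.1]
        · intro m hm
          rw [map_sub, map_smul, hh.2 m (hm.trans h1), smul_zero, sub_zero, hym.2 m hm]
        · intro m hm h4 h5
          rcases Nat.lt_succ_iff_lt_or_eq.mp hm with h' | rfl
          · rw [map_sub, map_smul, hh.2 m h', smul_zero, sub_zero, hyc m h' h4 h5]
          · rw [map_sub, map_smul, hh.1, smul_eq_mul, mul_one, sub_self]
      · refine ⟨y, hyR, hym, fun m hm h4 h5 => ?_⟩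
        rcases Nat.lt_succ_iff_lt_or_eq.mp hm with h' | rfl
        · exact hyc m h' h4 h5
        · by_contra h6
          exact H ⟨h4, h5, h6⟩
  obtain ⟨y, hyR, hym, hyc⟩ := clean (max c (n + 1))
  set N := max c (n + 1) with hN
  set xi : PowerSeries ℂ := ((PowerSeries.trunc N y : Polynomial ℂ) : PowerSeries ℂ) with hxi
  have hcoeff : ∀ m, PowerSeries.coeff m xi =
      if m < N then PowerSeries.coeff m y else 0 := by
    intro m
    rw [hxi, Polynomial.coeff_coe, PowerSeries.coeff_trunc]
  have hdiff : ∀ m < c, PowerSeries.coeff m (y - xi) = 0 := by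
    intro m hm
    rw [map_sub, hcoeff, if_pos (lt_of_lt_of_le hm (le_max_left _ _)), sub_self]
  have hxiR : xi ∈ R := by
    have h1 : y - xi ∈ R := tail_mem Γ c hc R hcl hsem _ hdiff
    have h2 := R.sub_mem hyR h1
    rwa [sub_sub_cancel] at h2
  have hnN : n < N := lt_of_lt_of_le (Nat.lt_succ_self n) (le_max_right c (n + 1))
  refine ⟨xi, hxiR, ⟨?_, ?_⟩, ?_⟩
  · rw [hcoeff, if_pos hnN]; exact hym.1
  · intro m hm
    rw [hcoeff]
    split
    · exact hym.2 m hm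
    · rfl
  · intro m hmn hm0
    rw [hcoeff] at hm0
    by_cases hmN : m < N
    · rw [if_pos hmN] at hm0
      have hnm : n < m := by
        rcases lt_trichotomy m n with h | h | h
        · exact absurd (hym.2 m h) hm0
        · exact absurd h hmn
        · exact h
      exact ⟨fun hmΓ => hm0 (hyc m hmN hnm hmΓ), hnm⟩
    · rw [if_neg hmN] at hm0
      exact absurd rfl hm0

/-- a closed `ℂ`-subalgebra of `ℂ[[t]]` with semigroup `Γ` (minimally
generated by `v 0 < ⋯ < v g`, conductor `c`) is of the form `⟨x₀,…,x_g⟩ + t^c·ℂ[[t]]`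
for a unique tuple `(x₀,…,x_g)` in normal form with respect to `Γ`. -/
theorem stmt2 (g : ℕ) (Γ : AddSubmonoid ℕ) (hfin : ((Γ : Set ℕ))ᶜ.Finite)
    (v : Fin (g + 1) → ℕ) (hmin : MinGen Γ v) (c : ℕ) (hc : IsConductor Γ c)
    (R : Subalgebra ℂ (PowerSeries ℂ)) (hcl : IsClosedSubalg R)
    (hsem : sgp (R : Set (PowerSeries ℂ)) = (Γ : Set ℕ)) :
    ∃! x : Fin (g + 1) → PowerSeries ℂ,
      NormalFormT Γ v x ∧ (R : Set (PowerSeries ℂ)) = adjSet x c := by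
  classical
  have hvΓ : ∀ i, v i ∈ Γ := fun i => by
    rw [← hmin.2.1]; exact AddSubmonoid.subset_closure ⟨i, rfl⟩
  have hrep : ∀ n ∈ Γ, ∃ a : Fin (g + 1) → ℕ, n = ∑ i, a i * v i := fun n hn =>
    mem_closure_range v n (by rw [hmin.2.1]; exact hn)
  choose x hxR hxm hxnf using fun i => exists_nf Γ c hc R hcl hsem (v i) (hvΓ i)
  have hNF : NormalFormT Γ v x := fun i => ⟨(hxm i).1, hxnf i⟩
  have hset : (R : Set (PowerSeries ℂ)) = adjSet x c := by
    ext f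
    constructor
    · intro hfR
      obtain ⟨p, hp⟩ := reduce Γ c v hrep R hsem x hxR hxm c 0 (by omega) f hfR
        (by omega)
      obtain ⟨h, hh⟩ := (PowerSeries.X_pow_dvd_iff).mpr hp
      exact ⟨p, h, by rw [← hh]; ring⟩
    · rintro ⟨p, h, rfl⟩
      refine R.add_mem (aeval_mem R x hxR p) (tail_mem Γ c hc R hcl hsem _ ?_)
      intro m hm
      exact PowerSeries.X_pow_dvd_iff.mp ⟨h, rfl⟩ m hm
  refine ⟨x, ⟨hNF, hset⟩, ?_⟩
  rintro y ⟨hyNF, hyset⟩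
  funext i
  have hyR : y i ∈ R := by
    have : y i ∈ (R : Set (PowerSeries ℂ)) := by
      rw [hyset]
      exact ⟨MvPolynomial.X i, 0, by simp⟩
    exact this
  have hxiR := hxR i
  by_contra hne
  have hne' : y i - x i ≠ 0 := sub_ne_zero.mpr hne
  have hex : ∃ m, PowerSeries.coeff m (y i - x i) ≠ 0 := by
    by_contra hall
    push_neg at hall
    exact hne' (PowerSeries.ext fun m => by simpa using hall m)
  have hspec := Nat.find_spec hex
  have hmin' : ∀ m < Nat.find hex, PowerSeries.coeff m (y i - x i) = 0 :=
    fun m hm => not_not.mp (Nat.find_min hex hm)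
  have hnΓ : Nat.find hex ∈ Γ := by
    have h0 : Nat.find hex ∈ sgp (R : Set (PowerSeries ℂ)) :=
      ⟨y i - x i, R.sub_mem hyR hxiR, hspec, hmin'⟩
    rwa [hsem] at h0
  have hnv : Nat.find hex ≠ v i := by
    intro h
    apply hspec
    rw [map_sub, h, (hyNF i).1, (hNF i).1, sub_self]
  have hnot : Nat.find hex ∉ Γ := by
    rw [map_sub] at hspec
    by_cases hy0 : PowerSeries.coeff (Nat.find hex) (y i) = 0
    · have hx0 : PowerSeries.coeff (Nat.find hex) (x i) ≠ 0 := by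
        intro h
        exact hspec (by rw [hy0, h, sub_self])
      exact ((hNF i).2 _ hnv hx0).1
    · exact ((hyNF i).2 _ hnv hy0).1
  exact hnot hnΓ
end
end

section
/- Let Γ be a numerical semigroup minimally generated by v₀ < ⋯ < v_g with conductor c, let (x₀,…,x_g) be a tuple in normal form with respect to Γ, and set R := ⟨x₀,…,x_g⟩ + t^c·ℂ[[t]]. For each n ∈ Γ with n < c fix a vector e(n) ∈ ℕ^{g+1} with Σᵢ e(n)ᵢ·vᵢ = n, and set f_n := ∏ᵢ xᵢ^{e(n)ᵢ} ∈ R. Then Γ_R = Γ if and only if for every pair of distinct vectors a, b ∈ ℕ^{g+1} with Σᵢ aᵢvᵢ = Σᵢ bᵢvᵢ < c, the element ∏ᵢ xᵢ^{aᵢ} − ∏ᵢ xᵢ^{bᵢ} lies in the ℂ-linear span of {f_n : n ∈ Γ, n < c} plus the ideal t^c·ℂ[[t]]. -/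
noncomputable section

namespace Stmt4Aux
open PowerSeries

/-- `f` has order exactly `n` with leading coefficient `1`. -/
def LT1 (f : PowerSeries ℂ) (n : ℕ) : Prop :=
  (∀ m < n, PowerSeries.coeff m f = 0) ∧ PowerSeries.coeff n f = 1

lemma LT1_one : LT1 1 0 :=
  ⟨fun m hm => absurd hm (Nat.not_lt_zero m), by simp⟩

lemma LT1_mul {f h : PowerSeries ℂ} {n m : ℕ} (hf : LT1 f n) (hh : LT1 h m) :
    LT1 (f * h) (n + m) := by
  constructor
  · intro k hk
    rw [PowerSeries.coeff_mul]
    apply Finset.sum_eq_zero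
    rintro ⟨i, j⟩ hij
    simp only [Finset.HasAntidiagonal.mem_antidiagonal] at hij
    rcases lt_or_ge i n with h1 | h1
    · rw [hf.1 i h1, zero_mul]
    · have : j < m := by omega
      rw [hh.1 j this, mul_zero]
  · rw [PowerSeries.coeff_mul, Finset.sum_eq_single (n, m)]
    · simp [hf.2, hh.2]
    · rintro ⟨i, j⟩ hij hne
      simp only [Finset.HasAntidiagonal.mem_antidiagonal] at hij
      rcases lt_or_ge i n with h1 | h1
      · rw [hf.1 i h1, zero_mul]
      · rcases lt_or_ge j m with h2 | h2
        · rw [hh.1 j h2, mul_zero]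
        · exact absurd (Prod.ext (by omega) (by omega)) hne
    · intro hmem
      simp at hmem

lemma LT1_pow {f : PowerSeries ℂ} {n : ℕ} (hf : LT1 f n) (k : ℕ) :
    LT1 (f ^ k) (k * n) := by
  induction k with
  | zero => simpa using LT1_one
  | succ k ih =>
      have h2 := LT1_mul ih hf
      rw [pow_succ, Nat.succ_mul]
      exact h2

lemma LT1_prod {k : ℕ} {x : Fin k → PowerSeries ℂ} {v : Fin k → ℕ}
    (hx : ∀ i, LT1 (x i) (v i)) (a : Fin k → ℕ) :
    LT1 (∏ i, x i ^ a i) (∑ i, a i * v i) := by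
  classical
  suffices H : ∀ s : Finset (Fin k), LT1 (∏ i ∈ s, x i ^ a i) (∑ i ∈ s, a i * v i) from H _
  intro s
  induction s using Finset.induction_on with
  | empty => simpa using LT1_one
  | insert _ _ hnot ih =>
      rw [Finset.prod_insert hnot, Finset.sum_insert hnot]
      exact LT1_mul (LT1_pow (hx _) _) ih

section W

variable {g : ℕ} (Γ : AddSubmonoid ℕ) {v : Fin (g + 1) → ℕ} (c : ℕ)
  (x : Fin (g + 1) → PowerSeries ℂ) (e : ℕ → Fin (g + 1) → ℕ)

def Tset : Set (PowerSeries ℂ) :=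
  {p : PowerSeries ℂ | ∃ n ∈ Γ, n < c ∧ p = ∏ i, x i ^ e n i}

def Wmod : Submodule ℂ (PowerSeries ℂ) :=
  Submodule.span ℂ (Tset Γ c x e) ⊔
    LinearMap.range (LinearMap.mulLeft ℂ ((PowerSeries.X : PowerSeries ℂ) ^ c))

lemma mem_Wmod_iff {f : PowerSeries ℂ} :
    f ∈ Wmod Γ c x e ↔ ∃ q ∈ Submodule.span ℂ (Tset Γ c x e),
      ∃ h : PowerSeries ℂ, f = q + (PowerSeries.X : PowerSeries ℂ) ^ c * h := by
  rw [Wmod, Submodule.mem_sup]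
  constructor
  · rintro ⟨y, hy, z, hz, rfl⟩
    obtain ⟨h, rfl⟩ := LinearMap.mem_range.mp hz
    exact ⟨y, hy, h, by rw [LinearMap.mulLeft_apply]⟩
  · rintro ⟨q, hq, h, rfl⟩
    exact ⟨q, hq, X ^ c * h, LinearMap.mem_range.mpr ⟨h, by rw [LinearMap.mulLeft_apply]⟩, rfl⟩

lemma Xc_mul_mem_Wmod (h : PowerSeries ℂ) :
    (PowerSeries.X : PowerSeries ℂ) ^ c * h ∈ Wmod Γ c x e :=
  (mem_Wmod_iff Γ c x e).mpr ⟨0, Submodule.zero_mem _, h, by rw [zero_add]⟩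

lemma span_le_Wmod : Submodule.span ℂ (Tset Γ c x e) ≤ Wmod Γ c x e := le_sup_left

variable {Γ c x e}

lemma monomial_mem_Wmod
    (hv : ∀ i, v i ∈ Γ)
    (hx1 : ∀ i, LT1 (x i) (v i))
    (he : ∀ n ∈ Γ, n < c → ∑ i, e n i * v i = n)
    (hbin : ∀ a b : Fin (g + 1) → ℕ, a ≠ b → (∑ i, a i * v i) = (∑ i, b i * v i) →
        (∑ i, a i * v i) < c →
        ∃ q ∈ Submodule.span ℂ (Tset Γ c x e), ∃ h : PowerSeries ℂ,
          (∏ i, x i ^ a i) - (∏ i, x i ^ b i) = q + (PowerSeries.X : PowerSeries ℂ) ^ c * h)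
    (d : Fin (g + 1) → ℕ) : (∏ i, x i ^ d i) ∈ Wmod Γ c x e := by
  rcases le_or_gt c (∑ i, d i * v i) with hcN | hNc
  · have hLT := LT1_prod hx1 d
    have hdvd : (X : PowerSeries ℂ) ^ c ∣ ∏ i, x i ^ d i := by
      rw [PowerSeries.X_pow_dvd_iff]
      intro m hm
      exact hLT.1 m (lt_of_lt_of_le hm hcN)
    obtain ⟨h, hh⟩ := hdvd
    rw [hh]
    exact Xc_mul_mem_Wmod Γ c x e h
  · have hNΓ : (∑ i, d i * v i) ∈ Γ := by
      apply sum_mem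
      intro i _
      have := AddSubmonoid.nsmul_mem Γ (hv i) (d i)
      rwa [smul_eq_mul] at this
    have hT : (∏ i, x i ^ e (∑ i, d i * v i) i) ∈ Tset Γ c x e :=
      ⟨∑ i, d i * v i, hNΓ, hNc, rfl⟩
    by_cases hd : d = e (∑ i, d i * v i)
    · rw [show (∏ i, x i ^ d i) = ∏ i, x i ^ e (∑ i, d i * v i) i by rw [← hd]]
      exact span_le_Wmod Γ c x e (Submodule.subset_span hT)
    · obtain ⟨q, hq, h, heq⟩ :=
        hbin d (e (∑ i, d i * v i)) hd (by rw [he _ hNΓ hNc]) hNc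
      have hrw : (∏ i, x i ^ d i)
          = (q + ∏ i, x i ^ e (∑ i, d i * v i) i) + (X : PowerSeries ℂ) ^ c * h := by
        rw [sub_eq_iff_eq_add] at heq
        rw [heq]; ring
      rw [hrw]
      exact Submodule.add_mem _
        (Submodule.add_mem _ (span_le_Wmod Γ c x e hq)
          (span_le_Wmod Γ c x e (Submodule.subset_span hT)))
        (Xc_mul_mem_Wmod Γ c x e h)

lemma adjSet_subset_Wmod
    (hv : ∀ i, v i ∈ Γ)
    (hx1 : ∀ i, LT1 (x i) (v i))
    (he : ∀ n ∈ Γ, n < c → ∑ i, e n i * v i = n)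
    (hbin : ∀ a b : Fin (g + 1) → ℕ, a ≠ b → (∑ i, a i * v i) = (∑ i, b i * v i) →
        (∑ i, a i * v i) < c →
        ∃ q ∈ Submodule.span ℂ (Tset Γ c x e), ∃ h : PowerSeries ℂ,
          (∏ i, x i ^ a i) - (∏ i, x i ^ b i) = q + (PowerSeries.X : PowerSeries ℂ) ^ c * h) :
    ∀ f ∈ adjSet x c, f ∈ Wmod Γ c x e := by
  rintro f ⟨p, h, rfl⟩
  apply Submodule.add_mem
  · rw [MvPolynomial.aeval_def, MvPolynomial.eval₂_eq']
    apply Submodule.sum_mem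
    intro dd _
    have hsm : (algebraMap ℂ (PowerSeries ℂ)) (MvPolynomial.coeff dd p) * ∏ i, x i ^ dd i
        = (MvPolynomial.coeff dd p) • ∏ i, x i ^ dd i := (Algebra.smul_def _ _).symm
    rw [hsm]
    exact Submodule.smul_mem _ _ (monomial_mem_Wmod hv hx1 he hbin fun i => dd i)
  · exact Xc_mul_mem_Wmod Γ c x e h

lemma order_mem_Gamma
    (hx1 : ∀ i, LT1 (x i) (v i))
    (he : ∀ n ∈ Γ, n < c → ∑ i, e n i * v i = n)
    {f : PowerSeries ℂ} {n : ℕ} (hf : f ∈ Wmod Γ c x e)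
    (h1 : PowerSeries.coeff n f ≠ 0) (h2 : ∀ m < n, PowerSeries.coeff m f = 0)
    (hnc : n < c) : n ∈ Γ := by
  classical
  obtain ⟨q, hq, h, rfl⟩ := (mem_Wmod_iff Γ c x e).mp hf
  have hXc : ∀ k, k < c → PowerSeries.coeff k ((X : PowerSeries ℂ) ^ c * h) = 0 :=
    fun k hk => PowerSeries.X_pow_dvd_iff.mp (dvd_mul_right _ _) k hk
  rw [Submodule.mem_span_set'] at hq
  obtain ⟨N, lam, gf, hsum⟩ := hq
  have hprops : ∀ i : Fin N, ∃ m : ℕ,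
      m ∈ Γ ∧ m < c ∧ (gf i : PowerSeries ℂ) = ∏ j, x j ^ e m j := by
    intro i
    obtain ⟨m, hm1, hm2, hm3⟩ := (gf i).2
    exact ⟨m, hm1, hm2, hm3⟩
  choose mf hm1 hm2 hm3 using hprops
  set F : ℕ → PowerSeries ℂ := fun k => ∏ j, x j ^ e k j with hF
  have hLT : ∀ k, k ∈ Γ → k < c → LT1 (F k) k := by
    intro k hk hkc
    have := LT1_prod hx1 (e k)
    rwa [he k hk hkc] at this
  set μ : ℕ → ℂ := fun k => ∑ i ∈ Finset.univ.filter (fun i => mf i = k), lam i with hμ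
  set img : Finset ℕ := Finset.image mf Finset.univ with himg
  have himgmem : ∀ k ∈ img, k ∈ Γ ∧ k < c := by
    intro k hk
    obtain ⟨i, _, rfl⟩ := Finset.mem_image.mp hk
    exact ⟨hm1 i, hm2 i⟩
  have hq2 : q = ∑ k ∈ img, μ k • F k := by
    rw [← hsum]
    have e1 : ∀ k ∈ img, μ k • F k = ∑ i ∈ Finset.univ.filter (fun i => mf i = k),
        lam i • F (mf i) := by
      intro k _
      rw [hμ]
      rw [Finset.sum_smul]
      apply Finset.sum_congr rfl
      intro i hi
      rw [(Finset.mem_filter.mp hi).2]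
    rw [Finset.sum_congr rfl e1]
    rw [Finset.sum_fiberwise_of_maps_to (fun i _ => Finset.mem_image_of_mem mf (Finset.mem_univ i))]
    apply Finset.sum_congr rfl
    intro i _
    rw [hm3 i]
  set A : Finset ℕ := img.filter (fun k => μ k ≠ 0) with hA
  have hq3 : q = ∑ k ∈ A, μ k • F k := by
    rw [hq2]
    symm
    apply Finset.sum_subset (Finset.filter_subset _ _)
    intro k hk hnk
    have : μ k = 0 := by
      by_contra hne
      exact hnk (Finset.mem_filter.mpr ⟨hk, hne⟩)
    rw [this, zero_smul]
  have hcoeff : ∀ k, k < c → PowerSeries.coeff k (q + (X : PowerSeries ℂ) ^ c * h)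
      = ∑ k' ∈ A, μ k' * PowerSeries.coeff k (F k') := by
    intro k hk
    rw [map_add, hXc k hk, add_zero, hq3, map_sum]
    apply Finset.sum_congr rfl
    intro k' _
    rw [map_smul, smul_eq_mul]
  rcases Finset.eq_empty_or_nonempty A with hAe | hAne
  · exact absurd (by rw [hcoeff n hnc, hAe, Finset.sum_empty]) h1
  · set m₀ := A.min' hAne with hm₀
    have hm₀A : m₀ ∈ A := A.min'_mem hAne
    have hm₀img : m₀ ∈ img := (Finset.mem_filter.mp hm₀A).1
    have hm₀μ : μ m₀ ≠ 0 := (Finset.mem_filter.mp hm₀A).2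
    obtain ⟨hm₀Γ, hm₀c⟩ := himgmem m₀ hm₀img
    have hcm₀ : PowerSeries.coeff m₀ (q + (X : PowerSeries ℂ) ^ c * h) = μ m₀ := by
      rw [hcoeff m₀ hm₀c, Finset.sum_eq_single m₀]
      · rw [(hLT m₀ hm₀Γ hm₀c).2, mul_one]
      · intro k hk hne
        obtain ⟨hkΓ, hkc⟩ := himgmem k (Finset.mem_filter.mp hk).1
        have hlt : m₀ < k := lt_of_le_of_ne (A.min'_le k hk) (Ne.symm hne)
        rw [(hLT k hkΓ hkc).1 m₀ hlt, mul_zero]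
      · intro hnot
        exact absurd hm₀A hnot
    have hnm₀ : n ≤ m₀ := by
      by_contra hlt
      push_neg at hlt
      exact hm₀μ (by rw [← hcm₀]; exact h2 m₀ hlt)
    have h1' := h1
    rw [hcoeff n hnc] at h1'
    obtain ⟨k, hkA, hkne⟩ := Finset.exists_ne_zero_of_sum_ne_zero h1'
    obtain ⟨hkΓ, hkc⟩ := himgmem k (Finset.mem_filter.mp hkA).1
    have hk0 : n ≤ k := le_trans hnm₀ (A.min'_le k hkA)
    rcases lt_or_eq_of_le hk0 with hlt | heqk
    · exact absurd (by rw [(hLT k hkΓ hkc).1 n hlt, mul_zero]) hkne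
    · rw [heqk]; exact hkΓ

lemma adjSet_low_vanish_mem
    (hsgp : sgp (adjSet x c) = (Γ : Set ℕ))
    (hx1 : ∀ i, LT1 (x i) (v i))
    (he : ∀ n ∈ Γ, n < c → ∑ i, e n i * v i = n) :
    ∀ d : ℕ, ∀ f ∈ adjSet x c,
      (∀ m, m < c - d → PowerSeries.coeff m f = 0) → f ∈ Wmod Γ c x e := by
  intro d
  induction d with
  | zero =>
      intro f hf hcoef
      have hdvd : (X : PowerSeries ℂ) ^ c ∣ f :=
        PowerSeries.X_pow_dvd_iff.mpr (fun m hm => hcoef m (by omega))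
      obtain ⟨h, rfl⟩ := hdvd
      exact Xc_mul_mem_Wmod Γ c x e h
  | succ d ih =>
      intro f hf hcoef
      by_cases hcd : c ≤ d
      · exact ih f hf (fun m hm => hcoef m (by omega))
      · by_cases h0 : PowerSeries.coeff (c - (d + 1)) f = 0
        · apply ih f hf
          intro m hm
          rcases (by omega : m < c - (d + 1) ∨ m = c - (d + 1)) with hcase | hcase
          · exact hcoef m hcase
          · rw [hcase]; exact h0
        · set n₀ := c - (d + 1) with hn₀
          have hn₀c : n₀ < c := by omega
          have hn₀Γ : n₀ ∈ Γ := by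
            have hmem : n₀ ∈ sgp (adjSet x c) :=
              ⟨f, hf, h0, fun m hm => hcoef m (by omega)⟩
            rw [hsgp] at hmem
            exact hmem
          have hLTF : LT1 (∏ j, x j ^ e n₀ j) n₀ := by
            have := LT1_prod hx1 (e n₀)
            rwa [he n₀ hn₀Γ hn₀c] at this
          set κ := PowerSeries.coeff n₀ f with hκ
          have hf' : f - κ • ∏ j, x j ^ e n₀ j ∈ adjSet x c := by
            obtain ⟨p, hh, rfl⟩ := hf
            refine ⟨p - MvPolynomial.C κ * ∏ j, MvPolynomial.X j ^ e n₀ j, hh, ?_⟩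
            rw [map_sub, map_mul, MvPolynomial.aeval_C, map_prod]
            simp only [map_pow, MvPolynomial.aeval_X]
            rw [Algebra.smul_def]
            ring
          have hc' : ∀ m, m < c - d →
              PowerSeries.coeff m (f - κ • ∏ j, x j ^ e n₀ j) = 0 := by
            intro m hm
            rw [map_sub, map_smul, smul_eq_mul]
            rcases (by omega : m < n₀ ∨ m = n₀) with hcase | hcase
            · rw [hcoef m (by omega), hLTF.1 m hcase, mul_zero, sub_zero]
            · rw [hcase, hLTF.2, mul_one, ← hκ, sub_self]
          have hmem' := ih _ hf' hc'
          have hsplit : f = (f - κ • ∏ j, x j ^ e n₀ j) + κ • ∏ j, x j ^ e n₀ j := by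
            ring
          rw [hsplit]
          exact Submodule.add_mem _ hmem'
            (Submodule.smul_mem _ _
              (span_le_Wmod Γ c x e (Submodule.subset_span ⟨n₀, hn₀Γ, hn₀c, rfl⟩)))

end W
end Stmt4Aux

/-- with `x` in normal form and `R = ⟨x₀,…,x_g⟩ + t^c·ℂ[[t]]`, and a fixed
monomial `f_n = ∏ x_i ^ (e n i)` of order `n` for each `n ∈ Γ`, `n < c`, we have
`Γ_R = Γ` iff every binomial difference `∏ x_i^{a_i} − ∏ x_i^{b_i}` (with
`Σ a_i v_i = Σ b_i v_i < c`, `a ≠ b`) lies in the `ℂ`-span of the `f_n` plus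
`t^c·ℂ[[t]]`. -/
theorem stmt4 (g : ℕ) (Γ : AddSubmonoid ℕ) (hfin : ((Γ : Set ℕ))ᶜ.Finite)
    (v : Fin (g + 1) → ℕ) (hmin : MinGen Γ v) (c : ℕ) (hc : IsConductor Γ c)
    (x : Fin (g + 1) → PowerSeries ℂ) (hx : NormalFormT Γ v x)
    (e : ℕ → Fin (g + 1) → ℕ) (he : ∀ n ∈ Γ, n < c → ∑ i, e n i * v i = n) :
    sgp (adjSet x c) = (Γ : Set ℕ) ↔
      ∀ a b : Fin (g + 1) → ℕ, a ≠ b → (∑ i, a i * v i) = (∑ i, b i * v i) →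
        (∑ i, a i * v i) < c →
        ∃ q ∈ Submodule.span ℂ
            {p : PowerSeries ℂ | ∃ n ∈ Γ, n < c ∧ p = ∏ i, x i ^ e n i},
          ∃ h : PowerSeries ℂ,
            (∏ i, x i ^ a i) - (∏ i, x i ^ b i) =
              q + (PowerSeries.X : PowerSeries ℂ) ^ c * h := by

  have hv : ∀ i, v i ∈ Γ := by
    intro i
    rw [← hmin.2.1]
    exact AddSubmonoid.subset_closure (Set.mem_range_self i)
  have hx1 : ∀ i, Stmt4Aux.LT1 (x i) (v i) := by
    intro i
    constructor
    · intro m hm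
      by_contra hne
      exact absurd hm (not_lt.mpr (le_of_lt ((hx i).2 m (Nat.ne_of_lt hm) hne).2))
    · exact (hx i).1
  constructor
  · intro hsgp a b hab heq hlt
    have hD : (∏ i, x i ^ a i) - (∏ i, x i ^ b i) ∈ adjSet x c := by
      refine ⟨(∏ i, MvPolynomial.X i ^ a i) - ∏ i, MvPolynomial.X i ^ b i, 0, ?_⟩
      rw [map_sub, map_prod, map_prod]
      simp only [map_pow, MvPolynomial.aeval_X]
      ring
    have hmem := Stmt4Aux.adjSet_low_vanish_mem (e := e) hsgp hx1 he c _ hD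
      (fun m hm => absurd hm (by omega))
    exact (Stmt4Aux.mem_Wmod_iff Γ c x e).mp hmem
  · intro hbin
    ext n
    constructor
    · rintro ⟨f, hf, h1, h2⟩
      rcases le_or_gt c n with hcn | hnc
      · exact hc.1 n hcn
      · exact Stmt4Aux.order_mem_Gamma hx1 he (Stmt4Aux.adjSet_subset_Wmod hv hx1 he hbin f hf) h1 h2 hnc
    · intro hn
      rcases le_or_gt c n with hcn | hnc
      · refine ⟨PowerSeries.X ^ n, ⟨0, PowerSeries.X ^ (n - c), ?_⟩, ?_, ?_⟩
        · rw [map_zero, zero_add, ← pow_add]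
          congr 1
          omega
        · rw [PowerSeries.coeff_X_pow]
          simp
        · intro m hm
          rw [PowerSeries.coeff_X_pow]
          simp only [ite_eq_right_iff]
          intro hmn
          omega
      · have hLTF : Stmt4Aux.LT1 (∏ j, x j ^ e n j) n := by
          have := Stmt4Aux.LT1_prod hx1 (e n)
          rwa [he n hn hnc] at this
        refine ⟨∏ j, x j ^ e n j, ⟨∏ j, MvPolynomial.X j ^ e n j, 0, ?_⟩, ?_, hLTF.1⟩
        · rw [map_prod]
          simp only [map_pow, MvPolynomial.aeval_X]
          ring
        · rw [hLTF.2]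
          exact one_ne_zero
end
end

section
/- Let Γ be a numerical semigroup minimally generated by v₀ < ⋯ < v_g with conductor c, and let M := Σ_{i=0}^{g} #{gaps of Γ greater than v_i}. Index the coordinates of ℂ^M by pairs (i, δ) with 0 ≤ i ≤ g and δ a gap of Γ with δ > v_i, and to u ∈ ℂ^M associate the normal-form tuple x_i(u) := t^{v_i} + Σ_δ u_{(i,δ)} t^δ and the ℂ-subalgebra R(u) := ⟨x₀(u),…,x_g(u)⟩ + t^c·ℂ[[t]]. Then there exist finitely many polynomials g₁,…,g_n in the M variables U_{(i,δ)} with complex coefficients such that for all u ∈ ℂ^M: Γ_{R(u)} = Γ if and only if g₁(u) = ⋯ = g_n(u) = 0. In particular the set of closed ℂ-subalgebras of ℂ[[t]] with semigroup Γ is in bijection with the ℂ-points of an affine subvariety of ℂ^M. -/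
noncomputable section

/-- The index type for the coordinates of `ℂ^M`: pairs `(i, δ)` where `δ` is a gap of `Γ`
greater than `v i`. -/
def GapIdx (Γ : AddSubmonoid ℕ) {k : ℕ} (v : Fin k → ℕ) : Type :=
  (i : Fin k) × {δ : ℕ // δ ∉ Γ ∧ v i < δ}

open scoped Classical in
/-- The normal-form tuple associated to a coefficient vector `u ∈ ℂ^M`:
`x i = t^(v i) + Σ_δ u_(i,δ) t^δ`. -/
def xfam (Γ : AddSubmonoid ℕ) {k : ℕ} (v : Fin k → ℕ) (u : GapIdx Γ v → ℂ) :
    Fin k → PowerSeries ℂ :=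
  fun i => PowerSeries.mk fun m =>
    if m = v i then 1 else if h : m ∉ Γ ∧ v i < m then u ⟨i, ⟨m, h⟩⟩ else 0

namespace S7

open PowerSeries
open scoped Classical

lemma exists_hasOrder {f : PowerSeries ℂ} (hf : f ≠ 0) : ∃ n, HasOrder f n := by
  have hne : ∃ n, PowerSeries.coeff n f ≠ 0 := by
    by_contra h
    push_neg at h
    exact hf (PowerSeries.ext fun n => by simp [h n])
  exact ⟨Nat.find hne, Nat.find_spec hne, fun m hm => by
    by_contra h; exact Nat.find_min hne hm h⟩

lemma hoNeZero {f : PowerSeries ℂ} {n : ℕ} (h : HasOrder f n) : f ≠ 0 := by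
  intro h0; exact h.1 (by simp [h0])

lemma hasOrder_one : HasOrder 1 0 := by
  constructor
  · simp
  · omega

lemma hasOrder_X_pow (n : ℕ) : HasOrder ((X : PowerSeries ℂ) ^ n) n := by
  constructor
  · simp [PowerSeries.coeff_X_pow]
  · intro m hm; simp [PowerSeries.coeff_X_pow, Nat.ne_of_lt hm]

lemma hoMul {f g : PowerSeries ℂ} {a b : ℕ} (hf : HasOrder f a) (hg : HasOrder g b) :
    HasOrder (f * g) (a + b) := by
  constructor
  · rw [PowerSeries.coeff_mul, Finset.sum_eq_single (a, b)]
    · exact mul_ne_zero hf.1 hg.1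
    · rintro ⟨p, q⟩ hpq hne
      rw [Finset.HasAntidiagonal.mem_antidiagonal] at hpq
      rcases lt_or_ge p a with h | h
      · rw [hf.2 p h, zero_mul]
      · rcases eq_or_lt_of_le h with h' | h'
        · have hq : q = b := by omega
          subst h'; subst hq; exact absurd rfl hne
        · rw [hg.2 q (by omega), mul_zero]
    · intro hmem
      simp [Finset.mem_antidiagonal] at hmem
  · intro m hm
    rw [PowerSeries.coeff_mul]
    apply Finset.sum_eq_zero
    rintro ⟨p, q⟩ hpq
    rw [Finset.HasAntidiagonal.mem_antidiagonal] at hpq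
    rcases lt_or_ge p a with h | h
    · rw [hf.2 p h, zero_mul]
    · rw [hg.2 q (by omega), mul_zero]

lemma hoPow {f : PowerSeries ℂ} {n : ℕ} (hf : HasOrder f n) (k : ℕ) :
    HasOrder (f ^ k) (k * n) := by
  induction k with
  | zero => simpa using hasOrder_one
  | succ k ih =>
    have := hoMul ih hf
    rw [← pow_succ] at this
    convert this using 1
    ring

lemma hoProd {ι : Type*} (s : Finset ι) (F : ι → PowerSeries ℂ) (n : ι → ℕ)
    (h : ∀ i ∈ s, HasOrder (F i) (n i)) :
    HasOrder (∏ i ∈ s, F i) (∑ i ∈ s, n i) := by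
  induction s using Finset.cons_induction with
  | empty => simpa using hasOrder_one
  | cons i s his ih =>
    rw [Finset.prod_cons, Finset.sum_cons]
    exact hoMul (h i (Finset.mem_cons_self i s)) (ih fun j hj => h j (Finset.mem_cons_of_mem hj))

lemma hoSmul {f : PowerSeries ℂ} {n : ℕ} (hf : HasOrder f n) {a : ℂ} (ha : a ≠ 0) :
    HasOrder (a • f) n := by
  constructor
  · rw [map_smul, smul_eq_mul]; exact mul_ne_zero ha hf.1
  · intro m hm; rw [map_smul, smul_eq_mul, hf.2 m hm, mul_zero]

lemma hasOrder_unique {f : PowerSeries ℂ} {n m : ℕ} (hn : HasOrder f n) (hm : HasOrder f m) :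
    n = m := by
  by_contra h
  rcases Nat.lt_or_ge n m with h' | h'
  · exact hn.1 (hm.2 n h')
  · exact hm.1 (hn.2 m (by omega))


lemma greedy (M : Submodule ℂ (PowerSeries ℂ)) (K : Set ℕ)
    (hwit : ∀ m ∈ K, ∃ r ∈ M, HasOrder r m) (N : ℕ) (f : PowerSeries ℂ) :
    ∃ q ∈ M, (∀ m, m < N → m ∈ K → PowerSeries.coeff m (f - q) = 0) ∧
      (∀ m, PowerSeries.coeff m q ≠ 0 → ∃ k ∈ K, k ≤ m) := by
  induction N with
  | zero => exact ⟨0, zero_mem _, fun m hm => by omega, fun m hm => by simp at hm⟩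
  | succ N ih =>
    obtain ⟨q, hqM, hq1, hq2⟩ := ih
    by_cases hNK : N ∈ K
    · obtain ⟨r, hrM, hr⟩ := hwit N hNK
      set a : ℂ := PowerSeries.coeff N (f - q) / PowerSeries.coeff N r with ha
      refine ⟨q + a • r, add_mem hqM (Submodule.smul_mem _ _ hrM), ?_, ?_⟩
      · intro m hm hmK
        have key : PowerSeries.coeff m (f - (q + a • r))
            = PowerSeries.coeff m (f - q) - a * PowerSeries.coeff m r := by
          simp [map_sub, map_add, map_smul, smul_eq_mul]; ring
        rcases Nat.lt_or_ge m N with h' | h'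
        · rw [key, hq1 m h' hmK, hr.2 m h', mul_zero, sub_zero]
        · have hmN : m = N := by omega
          subst hmN
          rw [key, ha, div_mul_cancel₀ _ hr.1, sub_self]
      · intro m hcm
        by_cases hq0 : PowerSeries.coeff m q = 0
        · have hne : a * PowerSeries.coeff m r ≠ 0 := by
            simpa [map_add, map_smul, smul_eq_mul, hq0] using hcm
          have hrne : PowerSeries.coeff m r ≠ 0 := fun h => hne (by simp [h])
          have hNm : N ≤ m := by
            by_contra h; push_neg at h; exact hrne (hr.2 m h)
          exact ⟨N, hNK, hNm⟩
        · exact hq2 m hq0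
    · refine ⟨q, hqM, fun m hm hmK => ?_, hq2⟩
      rcases Nat.lt_or_ge m N with h' | h'
      · exact hq1 m h' hmK
      · have : m = N := by omega
        subst this; exact absurd hmK hNK

lemma adjSet_add {k c : ℕ} {x : Fin k → PowerSeries ℂ} {f g : PowerSeries ℂ}
    (hf : f ∈ adjSet x c) (hg : g ∈ adjSet x c) : f + g ∈ adjSet x c := by
  obtain ⟨p, h, rfl⟩ := hf
  obtain ⟨p', h', rfl⟩ := hg
  exact ⟨p + p', h + h', by rw [map_add]; ring⟩

lemma adjSet_mul {k c : ℕ} {x : Fin k → PowerSeries ℂ} {f g : PowerSeries ℂ}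
    (hf : f ∈ adjSet x c) (hg : g ∈ adjSet x c) : f * g ∈ adjSet x c := by
  obtain ⟨p, h, rfl⟩ := hf
  obtain ⟨p', h', rfl⟩ := hg
  refine ⟨p * p', (MvPolynomial.aeval x p) * h' + (MvPolynomial.aeval x p') * h
    + PowerSeries.X ^ c * (h * h'), by rw [map_mul]; ring⟩

def adjAlg {k : ℕ} (x : Fin k → PowerSeries ℂ) (c : ℕ) : Subalgebra ℂ (PowerSeries ℂ) where
  carrier := adjSet x c
  add_mem' := adjSet_add
  mul_mem' := adjSet_mul
  algebraMap_mem' := fun a => ⟨MvPolynomial.C a, 0, by simp⟩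

@[simp] lemma adjAlg_coe {k : ℕ} (x : Fin k → PowerSeries ℂ) (c : ℕ) :
    (adjAlg x c : Set (PowerSeries ℂ)) = adjSet x c := rfl

lemma mem_adjAlg_iff {k c : ℕ} {x : Fin k → PowerSeries ℂ} {f : PowerSeries ℂ} :
    f ∈ adjAlg x c ↔ f ∈ adjSet x c := Iff.rfl

lemma adjAlg_closed {k : ℕ} (x : Fin k → PowerSeries ℂ) (c : ℕ) :
    IsClosedSubalg (adjAlg x c) := by
  intro f hf
  obtain ⟨q, hq, hcoef⟩ := hf c
  obtain ⟨h', hh'⟩ : (PowerSeries.X : PowerSeries ℂ) ^ c ∣ f - q :=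
    PowerSeries.X_pow_dvd_iff.mpr hcoef
  obtain ⟨p, h, rfl⟩ := hq
  exact ⟨p, h + h', by rw [mul_add, ← hh']; ring⟩


section Semigroup

variable {g : ℕ} {Γ : AddSubmonoid ℕ} {v : Fin (g + 1) → ℕ}

lemma range_subset (hmin : MinGen Γ v) : ∀ i, v i ∈ Γ := fun i =>
  hmin.2.1 ▸ AddSubmonoid.subset_closure ⟨i, rfl⟩

lemma v_pos (hmin : MinGen Γ v) : ∀ i, 1 ≤ v i := by
  intro i
  rcases Nat.eq_zero_or_pos (v i) with h0 | h
  · exfalso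
    apply hmin.2.2 (Set.range v \ {0})
    · constructor
      · exact Set.diff_subset
      · intro hsub
        have : (0 : ℕ) ∈ Set.range v \ {0} := hsub ⟨i, h0⟩
        exact this.2 rfl
    · rw [← hmin.2.1]
      apply le_antisymm
      · exact AddSubmonoid.closure_mono Set.diff_subset
      · rw [AddSubmonoid.closure_le]
        intro n hn
        by_cases hn0 : n = 0
        · subst hn0; exact zero_mem _
        · exact AddSubmonoid.subset_closure ⟨hn, hn0⟩
  · exact h

lemma mem_gamma_rep (hmin : MinGen Γ v) {n : ℕ} (hn : n ∈ Γ) :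
    ∃ α : Fin (g + 1) → ℕ, n = ∑ i, α i * v i := by
  let S : AddSubmonoid ℕ :=
    { carrier := {n | ∃ α : Fin (g + 1) → ℕ, n = ∑ i, α i * v i}
      zero_mem' := ⟨0, by simp⟩
      add_mem' := by
        rintro a b ⟨α, rfl⟩ ⟨β, rfl⟩
        exact ⟨α + β, by rw [← Finset.sum_add_distrib]; simp [add_mul]⟩ }
  have : Γ ≤ S := by
    rw [← hmin.2.1, AddSubmonoid.closure_le]
    rintro n ⟨i, rfl⟩
    exact ⟨Pi.single i 1, by simp [Pi.single_apply, Finset.sum_ite_eq']⟩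
  exact this hn

lemma rep_mem_gamma (hmin : MinGen Γ v) (α : Fin (g + 1) → ℕ) : (∑ i, α i * v i) ∈ Γ := by
  apply AddSubmonoid.sum_mem
  intro i _
  exact AddSubmonoid.nsmul_mem _ (range_subset hmin i) (α i)

end Semigroup

section TailNF

variable {g c : ℕ} {Γ : AddSubmonoid ℕ} {v : Fin (g + 1) → ℕ}

lemma sgp_wit {R : Subalgebra ℂ (PowerSeries ℂ)}
    (hsgp : sgp (R : Set (PowerSeries ℂ)) = (Γ : Set ℕ)) {m : ℕ} (hm : m ∈ Γ) :
    ∃ r ∈ R, HasOrder r m := by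
  have : m ∈ sgp (R : Set (PowerSeries ℂ)) := by rw [hsgp]; exact hm
  exact this

lemma tail_mem {R : Subalgebra ℂ (PowerSeries ℂ)} (hcl : IsClosedSubalg R)
    (hsgp : sgp (R : Set (PowerSeries ℂ)) = (Γ : Set ℕ)) (hc1 : ∀ n, c ≤ n → n ∈ Γ)
    (h : PowerSeries ℂ) : (PowerSeries.X : PowerSeries ℂ) ^ c * h ∈ R := by
  apply hcl
  intro N
  obtain ⟨q, hqM, h1, h2⟩ := greedy (Subalgebra.toSubmodule R) {m : ℕ | c ≤ m}
    (fun m hm => sgp_wit hsgp (hc1 m hm)) N ((PowerSeries.X : PowerSeries ℂ) ^ c * h)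
  refine ⟨q, hqM, fun m hm => ?_⟩
  rcases Nat.lt_or_ge m c with h' | h'
  · have hX : PowerSeries.coeff m ((PowerSeries.X : PowerSeries ℂ) ^ c * h) = 0 :=
      PowerSeries.X_pow_dvd_iff.mp (Dvd.intro h rfl) m h'
    have hq : PowerSeries.coeff m q = 0 := by
      by_contra hne
      obtain ⟨k, hk, hkm⟩ := h2 m hne
      exact absurd hk (by simp; omega)
    rw [map_sub, hX, hq, sub_zero]
  · exact h1 m hm h'

lemma exists_nf {R : Subalgebra ℂ (PowerSeries ℂ)} (hcl : IsClosedSubalg R)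
    (hsgp : sgp (R : Set (PowerSeries ℂ)) = (Γ : Set ℕ)) (hmin : MinGen Γ v)
    (hc1 : ∀ n, c ≤ n → n ∈ Γ) :
    ∃ x : Fin (g + 1) → PowerSeries ℂ, (∀ i, x i ∈ R) ∧ NormalFormT Γ v x := by
  have key : ∀ i : Fin (g + 1), ∃ xi ∈ R,
      PowerSeries.coeff (v i) xi = 1 ∧
      ∀ m, m ≠ v i → PowerSeries.coeff m xi ≠ 0 → m ∉ Γ ∧ v i < m := by
    intro i
    obtain ⟨y, hyR, hy⟩ := sgp_wit hsgp (range_subset hmin i)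
    set y1 : PowerSeries ℂ := (PowerSeries.coeff (v i) y)⁻¹ • y with hy1
    have hy1R : y1 ∈ R := Subalgebra.smul_mem R hyR _
    have hy1o : HasOrder y1 (v i) := hoSmul hy (inv_ne_zero hy.1)
    have hy1c : PowerSeries.coeff (v i) y1 = 1 := by
      rw [hy1, map_smul, smul_eq_mul, inv_mul_cancel₀ hy.1]
    set N : ℕ := max c (v i + 1) with hN
    obtain ⟨q, hqM, h1, h2⟩ := greedy (Subalgebra.toSubmodule R) {m : ℕ | m ∈ Γ ∧ v i < m}
      (fun m hm => sgp_wit hsgp hm.1) N y1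
    set z : PowerSeries ℂ := y1 - q with hz
    have hzR : z ∈ R := sub_mem hy1R hqM
    have hql : ∀ m, m ≤ v i → PowerSeries.coeff m q = 0 := by
      intro m hm
      by_contra hne
      obtain ⟨k, hk, hkm⟩ := h2 m hne
      exact absurd hk (by simp; intro _; omega)
    set xi : PowerSeries ℂ := ((z.trunc N : Polynomial ℂ) : PowerSeries ℂ) with hxi
    have hcoe : ∀ m, PowerSeries.coeff m xi
        = if m < N then PowerSeries.coeff m z else 0 := by
      intro m
      rw [hxi, Polynomial.coeff_coe, PowerSeries.coeff_trunc]
    have htail : z - xi ∈ R := by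
      have : (PowerSeries.X : PowerSeries ℂ) ^ c ∣ z - xi := by
        rw [PowerSeries.X_pow_dvd_iff]
        intro m hm
        rw [map_sub, hcoe m, if_pos (by omega), sub_self]
      obtain ⟨h', hh'⟩ := this
      rw [hh']
      exact tail_mem hcl hsgp hc1 h'
    have hxiR : xi ∈ R := by
      have : xi = z - (z - xi) := by ring
      rw [this]; exact sub_mem hzR htail
    refine ⟨xi, hxiR, ?_, ?_⟩
    · rw [hcoe, if_pos (by omega), hz, map_sub, hy1c, hql (v i) le_rfl, sub_zero]
    · intro m hmv hmne
      rw [hcoe] at hmne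
      by_cases hmN : m < N
      · rw [if_pos hmN] at hmne
        constructor
        · intro hmΓ
          rcases Nat.lt_or_ge (v i) m with h' | h'
          · exact hmne (by rw [hz]; exact h1 m hmN ⟨hmΓ, h'⟩)
          · have hlt : m < v i := by omega
            apply hmne
            rw [hz, map_sub, hy1o.2 m hlt, hql m (by omega), sub_zero]
        · rcases Nat.lt_or_ge (v i) m with h' | h'
          · exact h'
          · exfalso
            have hlt : m < v i := by omega
            apply hmne
            rw [hz, map_sub, hy1o.2 m hlt, hql m (by omega), sub_zero]
      · rw [if_neg hmN] at hmne
        exact absurd rfl hmne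
  choose x hxR hx1 hx2 using key
  exact ⟨x, hxR, fun i => ⟨hx1 i, hx2 i⟩⟩


lemma nf_hasOrder {x : Fin (g + 1) → PowerSeries ℂ} (hnf : NormalFormT Γ v x) (i : Fin (g + 1)) :
    HasOrder (x i) (v i) := by
  refine ⟨by rw [(hnf i).1]; exact one_ne_zero, ?_⟩
  intro m hm
  by_contra hne
  exact absurd ((hnf i).2 m (by omega) hne).2 (by omega)

lemma mon_hasOrder {x : Fin (g + 1) → PowerSeries ℂ} (hnf : NormalFormT Γ v x)
    (α : Fin (g + 1) → ℕ) :
    HasOrder (∏ i, x i ^ α i) (∑ i, α i * v i) :=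
  hoProd _ _ _ fun i _ => hoPow (nf_hasOrder hnf i) (α i)

lemma mon_mem_adjoin {x : Fin (g + 1) → PowerSeries ℂ} (α : Fin (g + 1) → ℕ) :
    (∏ i, x i ^ α i) ∈ Algebra.adjoin ℂ (Set.range x) :=
  Subalgebra.prod_mem _ fun i _ =>
    Subalgebra.pow_mem _ (Algebra.subset_adjoin (Set.mem_range_self i)) _

lemma adjSet_subset {R : Subalgebra ℂ (PowerSeries ℂ)} (hcl : IsClosedSubalg R)
    (hsgp : sgp (R : Set (PowerSeries ℂ)) = (Γ : Set ℕ)) (hc1 : ∀ n, c ≤ n → n ∈ Γ)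
    {x : Fin (g + 1) → PowerSeries ℂ} (hx : ∀ i, x i ∈ R) :
    adjSet x c ⊆ (R : Set (PowerSeries ℂ)) := by
  rintro f ⟨p, h, rfl⟩
  apply add_mem
  · have h1 : MvPolynomial.aeval x p ∈ Algebra.adjoin ℂ (Set.range x) := by
      rw [Algebra.adjoin_range_eq_range_aeval]
      exact AlgHom.mem_range_self _ p
    have h2 : Algebra.adjoin ℂ (Set.range x) ≤ R :=
      Algebra.adjoin_le (by rintro _ ⟨i, rfl⟩; exact hx i)
    exact h2 h1
  · exact tail_mem hcl hsgp hc1 h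

lemma subset_adjSet {R : Subalgebra ℂ (PowerSeries ℂ)}
    (hsgp : sgp (R : Set (PowerSeries ℂ)) = (Γ : Set ℕ)) (hmin : MinGen Γ v)
    {x : Fin (g + 1) → PowerSeries ℂ} (hx : ∀ i, x i ∈ R) (hnf : NormalFormT Γ v x) :
    (R : Set (PowerSeries ℂ)) ⊆ adjSet x c := by
  intro f hf
  have hwit : ∀ m ∈ (Γ : Set ℕ),
      ∃ r ∈ Subalgebra.toSubmodule (Algebra.adjoin ℂ (Set.range x)), HasOrder r m := by
    intro m hm
    obtain ⟨α, rfl⟩ := mem_gamma_rep hmin hm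
    exact ⟨∏ i, x i ^ α i, mon_mem_adjoin α, mon_hasOrder hnf α⟩
  obtain ⟨q, hqM, h1, h2⟩ := greedy _ _ hwit c f
  have hqR : q ∈ R := by
    have h2' : Algebra.adjoin ℂ (Set.range x) ≤ R :=
      Algebra.adjoin_le (by rintro _ ⟨i, rfl⟩; exact hx i)
    exact h2' hqM
  have hlow : ∀ m, m < c → PowerSeries.coeff m (f - q) = 0 := by
    by_cases hfq : f - q = 0
    · intro m _; rw [hfq, map_zero]
    · obtain ⟨m₀, hm₀⟩ := exists_hasOrder hfq
      have hm₀Γ : m₀ ∈ Γ := by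
        have : m₀ ∈ sgp (R : Set (PowerSeries ℂ)) := ⟨f - q, sub_mem hf hqR, hm₀⟩
        rwa [hsgp] at this
      have hm₀c : ¬ m₀ < c := fun hlt => hm₀.1 (h1 m₀ hlt hm₀Γ)
      intro m hm
      exact hm₀.2 m (by omega)
  obtain ⟨h', hh'⟩ : (PowerSeries.X : PowerSeries ℂ) ^ c ∣ f - q :=
    PowerSeries.X_pow_dvd_iff.mpr hlow
  obtain ⟨p, hp⟩ : ∃ p : MvPolynomial (Fin (g + 1)) ℂ, MvPolynomial.aeval x p = q := by
    have := hqM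
    rw [Algebra.adjoin_range_eq_range_aeval] at this
    exact (AlgHom.mem_range _).mp this
  exact ⟨p, h', by rw [hp, ← hh']; ring⟩

lemma nf_unique {R : Subalgebra ℂ (PowerSeries ℂ)}
    (hsgp : sgp (R : Set (PowerSeries ℂ)) = (Γ : Set ℕ))
    {x x' : Fin (g + 1) → PowerSeries ℂ} (hx : ∀ i, x i ∈ R) (hx' : ∀ i, x' i ∈ R)
    (hnf : NormalFormT Γ v x) (hnf' : NormalFormT Γ v x') : x = x' := by
  funext i
  by_contra hne
  have hdd : x i - x' i ≠ 0 := fun h => hne (by linear_combination (norm := module) h)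
  obtain ⟨m₀, hm₀⟩ := exists_hasOrder hdd
  have hm₀Γ : m₀ ∈ Γ := by
    have : m₀ ∈ sgp (R : Set (PowerSeries ℂ)) := ⟨_, sub_mem (hx i) (hx' i), hm₀⟩
    rwa [hsgp] at this
  have hms : PowerSeries.coeff m₀ (x i - x' i)
      = PowerSeries.coeff m₀ (x i) - PowerSeries.coeff m₀ (x' i) := map_sub _ _ _
  have hmv : m₀ ≠ v i := by
    intro h
    subst h
    exact hm₀.1 (by rw [hms, (hnf i).1, (hnf' i).1, sub_self])
  by_cases h1 : PowerSeries.coeff m₀ (x i) = 0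
  · have h2 : PowerSeries.coeff m₀ (x' i) ≠ 0 := by
      intro h; exact hm₀.1 (by rw [hms, h1, h, sub_self])
    exact ((hnf' i).2 m₀ hmv h2).1 hm₀Γ
  · exact ((hnf i).2 m₀ hmv h1).1 hm₀Γ

end TailNF

section LinAlg

open Submodule Module Matrix

variable {c : ℕ}

def vord (w : Fin c → ℂ) (k : Fin c) : Prop := w k ≠ 0 ∧ ∀ m : Fin c, m < k → w m = 0

lemma indep_of_vord {s : Finset (Fin c)} {w : ↥s → (Fin c → ℂ)}
    (hw : ∀ k : ↥s, vord (w k) k) : LinearIndependent ℂ w := by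
  rw [linearIndependent_iff']
  intro t gc hsum j hj
  by_contra hgj
  have ht' : (t.filter fun i => gc i ≠ 0).Nonempty := ⟨j, Finset.mem_filter.mpr ⟨hj, hgj⟩⟩
  obtain ⟨j₀, hj₀, hmin⟩ := Finset.exists_min_image _ (fun i : ↥s => (i : Fin c)) ht'
  rw [Finset.mem_filter] at hj₀
  have := congrFun hsum (j₀ : Fin c)
  rw [Finset.sum_apply, Finset.sum_eq_single j₀] at this
  · simp only [Pi.smul_apply, smul_eq_mul, Pi.zero_apply] at this
    rcases mul_eq_zero.mp this with h | h
    · exact hj₀.2 h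
    · exact (hw j₀).1 h
  · intro i hi hij
    by_cases hgi : gc i = 0
    · simp [hgi]
    · have hle : (j₀ : Fin c) ≤ (i : Fin c) :=
        hmin i (Finset.mem_filter.mpr ⟨hi, hgi⟩)
      have hlt : (j₀ : Fin c) < (i : Fin c) :=
        lt_of_le_of_ne hle (fun h => hij (Subtype.ext h).symm)
      simp [Pi.smul_apply, (hw i).2 _ hlt]
  · intro h; exact absurd hj₀.1 h

lemma span_of_vord {W : Submodule ℂ (Fin c → ℂ)} {s : Finset (Fin c)}
    {w : ↥s → (Fin c → ℂ)} (hw : ∀ k : ↥s, w k ∈ W ∧ vord (w k) k)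
    (hords : ∀ k : Fin c, (∃ f ∈ W, vord f k) → k ∈ s) :
    W ≤ Submodule.span ℂ (Set.range w) := by
  suffices H : ∀ j : ℕ, ∀ f ∈ W, (∀ m : Fin c, (m : ℕ) < c - j → f m = 0) →
      f ∈ Submodule.span ℂ (Set.range w) by
    intro f hf
    exact H c f hf (fun m hm => absurd m.2 (by omega))
  intro j
  induction j with
  | zero =>
    intro f _ h0
    have : f = 0 := funext fun m => h0 m (by omega)
    rw [this]; exact zero_mem _
  | succ j ih =>
    intro f hf hcond
    rcases Nat.lt_or_ge j c with hjc | hjc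
    · set k : ℕ := c - (j + 1) with hk
      have hkc : k < c := by omega
      by_cases hfk : f ⟨k, hkc⟩ = 0
      · apply ih f hf
        intro m hm
        rcases Nat.lt_or_ge (m : ℕ) k with h' | h'
        · exact hcond m (by omega)
        · have : (m : ℕ) = k := by omega
          rwa [show m = ⟨k, hkc⟩ from Fin.ext this]
      · have hvord : vord f ⟨k, hkc⟩ := ⟨hfk, fun m hm => hcond m hm⟩
        have hks : (⟨k, hkc⟩ : Fin c) ∈ s := hords _ ⟨f, hf, hvord⟩
        set k' : ↥s := ⟨⟨k, hkc⟩, hks⟩ with hk'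
        set a : ℂ := f ⟨k, hkc⟩ / (w k' ⟨k, hkc⟩) with ha
        have hwk := hw k'
        have hne : w k' ⟨k, hkc⟩ ≠ 0 := hwk.2.1
        have h1 : f - a • w k' ∈ Submodule.span ℂ (Set.range w) := by
          apply ih _ (sub_mem hf (Submodule.smul_mem _ _ hwk.1))
          intro m hm
          rcases Nat.lt_or_ge (m : ℕ) k with h' | h'
          · simp [hcond m (by omega), hwk.2.2 m h']
          · have hmk : m = ⟨k, hkc⟩ := Fin.ext (show (m : ℕ) = k by omega)
            subst hmk
            simp [ha, div_mul_cancel₀ _ hne]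
        have : f = (f - a • w k') + a • w k' := by ring
        rw [this]
        exact add_mem h1 (Submodule.smul_mem _ _ (Submodule.subset_span ⟨k', rfl⟩))
    · apply ih f hf
      intro m hm
      exact hcond m (by omega)

lemma exists_indep_subfamily {V : Type*} [AddCommGroup V] [Module ℂ V]
    [FiniteDimensional ℂ V] (S : Set V) (d : ℕ)
    (hd : d ≤ finrank ℂ (Submodule.span ℂ S)) :
    ∃ z : Fin d → V, (∀ a, z a ∈ S) ∧ LinearIndependent ℂ z := by
  obtain ⟨b, hbS, hbspan, hbind⟩ := exists_linearIndependent ℂ S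
  have hfin : b.Finite := by
    haveI := hbind.finite
    exact b.toFinite
  haveI : Fintype ↥b := hfin.fintype
  have hcard : finrank ℂ (Submodule.span ℂ b) = b.toFinset.card :=
    finrank_span_set_eq_card hbind
  have hdle : d ≤ Fintype.card ↥b := by
    calc d ≤ finrank ℂ (Submodule.span ℂ S) := hd
    _ = finrank ℂ (Submodule.span ℂ b) := by rw [hbspan]
    _ = b.toFinset.card := hcard
    _ = Fintype.card ↥b := Set.toFinset_card b
  obtain ⟨emb⟩ : Nonempty (Fin d ↪ ↥b) :=
    Function.Embedding.nonempty_of_card_le (by simpa using hdle)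
  refine ⟨fun a => ↑(emb a), fun a => hbS (emb a).2, ?_⟩
  exact hbind.comp emb emb.injective


lemma finrank_span_le_iff_det {T : Type*} [Fintype T] (y : T → (Fin c → ℂ)) (d : ℕ) :
    finrank ℂ (Submodule.span ℂ (Set.range y)) ≤ d ↔
      ∀ (σ : Fin (d + 1) → T) (τ : Fin (d + 1) → Fin c),
        (Matrix.of fun a b => y (σ b) (τ a)).det = 0 := by
  constructor
  · intro hle σ τ
    have hdep : ¬ LinearIndependent ℂ (y ∘ σ) := by
      intro hind
      have h1 : finrank ℂ (Submodule.span ℂ (Set.range (y ∘ σ))) = d + 1 := by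
        rw [finrank_span_eq_card hind, Fintype.card_fin]
      have h2 : Submodule.span ℂ (Set.range (y ∘ σ)) ≤ Submodule.span ℂ (Set.range y) :=
        Submodule.span_mono (Set.range_comp_subset_range σ y)
      have := Submodule.finrank_mono h2
      omega
    rw [Fintype.not_linearIndependent_iff] at hdep
    obtain ⟨gc, hsum, ⟨b₀, hb₀⟩⟩ := hdep
    rw [← Matrix.exists_mulVec_eq_zero_iff]
    refine ⟨gc, fun h => hb₀ (by rw [h]; rfl), ?_⟩
    funext a
    have := congrFun hsum (τ a)
    rw [Finset.sum_apply] at this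
    simpa [Matrix.mulVec, dotProduct, mul_comm] using this
  · intro hdet
    by_contra hgt
    push_neg at hgt
    obtain ⟨z, hzS, hzind⟩ := exists_indep_subfamily (Set.range y) (d + 1) (by omega)
    choose σ hσ using hzS
    set N : Matrix (Fin c) (Fin (d + 1)) ℂ := Matrix.of fun a b => z b a with hN
    have hrankN : N.rank = d + 1 := by
      rw [Matrix.rank_eq_finrank_span_cols]
      have hTz : Set.range N.col = Set.range z := rfl
      rw [hTz, finrank_span_eq_card hzind, Fintype.card_fin]
    have hrowspan : (d : ℕ) + 1 ≤ finrank ℂ (Submodule.span ℂ (Set.range N)) := by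
      have h1 := Matrix.rank_eq_finrank_span_cols Nᵀ
      rw [Matrix.rank_transpose, hrankN] at h1
      exact h1.le
    obtain ⟨zr, hzrS, hzrind⟩ :=
      exists_indep_subfamily (Set.range N) (d + 1) hrowspan
    choose τ hτ using hzrS
    apply absurd (hdet σ τ)
    intro hdet0
    obtain ⟨vv, hvv0, hvvmul⟩ := Matrix.exists_vecMul_eq_zero_iff.mpr hdet0
    apply hvv0
    have hzero : ∑ a, vv a • zr a = 0 := by
      funext b
      have := congrFun hvvmul b
      rw [Finset.sum_apply]
      simp only [Pi.smul_apply, smul_eq_mul, Pi.zero_apply]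
      calc ∑ a, vv a * zr a b = ∑ a, vv a * y (σ b) (τ a) := by
            apply Finset.sum_congr rfl
            intro a _
            rw [← hτ a]
            have : N (τ a) b = z b (τ a) := rfl
            rw [this, hσ b]
      _ = 0 := by
            have h2 := congrFun hvvmul b
            simpa [Matrix.vecMul, dotProduct] using h2
    funext a
    exact Fintype.linearIndependent_iff.mp hzrind vv (by simpa using hzero) a

end LinAlg

section Poly

open scoped Classical

variable (Γ : AddSubmonoid ℕ) {k : ℕ} (v : Fin k → ℕ) (c : ℕ)

noncomputable def Xser : Fin k → PowerSeries (MvPolynomial (GapIdx Γ v) ℂ) :=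
  fun i => PowerSeries.mk fun m =>
    if m = v i then 1 else if h : m ∉ Γ ∧ v i < m then MvPolynomial.X ⟨i, ⟨m, h⟩⟩ else 0

lemma map_Xser (u : GapIdx Γ v → ℂ) (i : Fin k) :
    PowerSeries.map (MvPolynomial.eval u) (Xser Γ v i) = xfam Γ v u i := by
  ext m
  rw [PowerSeries.coeff_map]
  simp only [Xser, xfam, PowerSeries.coeff_mk]
  split_ifs with h1 h2
  · simp
  · exact MvPolynomial.eval_X _
  · simp

noncomputable def Pmat (α : Fin k → Fin c) (m : Fin c) : MvPolynomial (GapIdx Γ v) ℂ :=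
  PowerSeries.coeff (m : ℕ) (∏ i, Xser Γ v i ^ (α i : ℕ))

noncomputable def yvec (u : GapIdx Γ v → ℂ) (α : Fin k → Fin c) : Fin c → ℂ :=
  fun m => PowerSeries.coeff (m : ℕ) (∏ i, xfam Γ v u i ^ (α i : ℕ))

lemma eval_Pmat (u : GapIdx Γ v → ℂ) (α : Fin k → Fin c) (m : Fin c) :
    MvPolynomial.eval u (Pmat Γ v c α m) = yvec Γ v c u α m := by
  unfold Pmat yvec
  rw [← PowerSeries.coeff_map, map_prod]
  congr 1
  refine Finset.prod_congr rfl fun i _ => ?_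
  rw [map_pow, map_Xser]

noncomputable def Gdet (d : ℕ) (σ : Fin (d + 1) → (Fin k → Fin c))
    (τ : Fin (d + 1) → Fin c) : MvPolynomial (GapIdx Γ v) ℂ :=
  (Matrix.of fun a b => Pmat Γ v c (σ b) (τ a)).det

lemma eval_Gdet (d : ℕ) (σ : Fin (d + 1) → (Fin k → Fin c)) (τ : Fin (d + 1) → Fin c)
    (u : GapIdx Γ v → ℂ) :
    MvPolynomial.eval u (Gdet Γ v c d σ τ)
      = (Matrix.of fun a b => yvec Γ v c u (σ b) (τ a)).det := by
  unfold Gdet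
  rw [RingHom.map_det]
  congr 1
  ext a b
  simp [Matrix.map_apply, eval_Pmat]

end Poly

section Main

open scoped Classical
open Submodule Module

variable {g c : ℕ} {Γ : AddSubmonoid ℕ} {v : Fin (g + 1) → ℕ}

noncomputable def truncL (c : ℕ) : PowerSeries ℂ →ₗ[ℂ] (Fin c → ℂ) :=
  LinearMap.pi fun m => PowerSeries.coeff (m : ℕ)

@[simp] lemma truncL_apply (c : ℕ) (f : PowerSeries ℂ) (m : Fin c) :
    truncL c f m = PowerSeries.coeff (m : ℕ) f := rfl

lemma xfam_nf (u : GapIdx Γ v → ℂ) : NormalFormT Γ v (xfam Γ v u) := by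
  intro i
  constructor
  · simp [xfam, PowerSeries.coeff_mk]
  · intro m hmv hne
    simp only [xfam, PowerSeries.coeff_mk, if_neg hmv] at hne
    by_cases h : m ∉ Γ ∧ v i < m
    · exact h
    · rw [dif_neg h] at hne
      exact absurd rfl hne

lemma mon_mem_adjSet {x : Fin (g + 1) → PowerSeries ℂ} (α : Fin (g + 1) → ℕ) :
    (∏ i, x i ^ α i) ∈ adjSet x c := by
  refine ⟨∏ i, MvPolynomial.X i ^ α i, 0, ?_⟩
  rw [map_prod, mul_zero, add_zero]
  refine (Finset.prod_congr rfl fun i _ => ?_).symm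
  rw [map_pow, MvPolynomial.aeval_X]

lemma key_iff (hmin : MinGen Γ v) (hc1 : ∀ n, c ≤ n → n ∈ Γ) (u : GapIdx Γ v → ℂ) :
    sgp (adjSet (xfam Γ v u) c) = (Γ : Set ℕ) ↔
      finrank ℂ (Submodule.span ℂ (Set.range (yvec Γ v c u))) ≤
        (Finset.univ.filter fun k : Fin c => (k : ℕ) ∈ Γ).card := by
  set x : Fin (g + 1) → PowerSeries ℂ := xfam Γ v u with hx
  have hnf : NormalFormT Γ v x := xfam_nf u
  set W : Submodule ℂ (Fin c → ℂ) := Submodule.span ℂ (Set.range (yvec Γ v c u)) with hW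
  set ΓF : Finset (Fin c) := Finset.univ.filter (fun k : Fin c => (k : ℕ) ∈ Γ) with hΓF
  -- h1 : truncations of adjSet lie in W
  have h1 : ∀ f ∈ adjSet x c, truncL c f ∈ W := by
    rintro f ⟨p, h, rfl⟩
    rw [map_add]
    have htail : truncL c ((PowerSeries.X : PowerSeries ℂ) ^ c * h) = 0 := by
      funext m
      exact PowerSeries.X_pow_dvd_iff.mp (Dvd.intro h rfl) m m.2
    rw [htail, add_zero]
    rw [MvPolynomial.as_sum p, map_sum, map_sum]
    apply Submodule.sum_mem
    intro α _
    rw [MvPolynomial.aeval_monomial]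
    have hprod : (α.prod fun i k => x i ^ k) = ∏ i, x i ^ α i := Finsupp.prod_pow α _
    rw [hprod, ← Algebra.smul_def, map_smul]
    apply Submodule.smul_mem
    by_cases hb : ∀ i, (α i : ℕ) < c
    · have : truncL c (∏ i, x i ^ α i) = yvec Γ v c u (fun i => ⟨α i, hb i⟩) := rfl
      rw [this]
      exact Submodule.subset_span (Set.mem_range_self _)
    · push_neg at hb
      obtain ⟨i₀, hi₀⟩ := hb
      have hord := mon_hasOrder hnf (fun i => α i)
      have : truncL c (∏ i, x i ^ α i) = 0 := by
        funext m
        refine hord.2 (m : ℕ) ?_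
        calc (m : ℕ) < c := m.2
        _ ≤ α i₀ := hi₀
        _ ≤ α i₀ * v i₀ := Nat.le_mul_of_pos_right _ (v_pos hmin i₀)
        _ ≤ ∑ i, α i * v i := Finset.single_le_sum (f := fun i => (α i : ℕ) * v i) (fun i _ => Nat.zero_le _) (Finset.mem_univ i₀)
      rw [this]
      exact zero_mem _
  -- h2 : every element of W is a truncation of an element of adjSet
  have h2 : ∀ w ∈ W, ∃ f ∈ adjSet x c, truncL c f = w := by
    intro w hw
    have hle : W ≤ Submodule.map (truncL c) (Subalgebra.toSubmodule (adjAlg x c)) := by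
      rw [hW, Submodule.span_le]
      rintro _ ⟨α, rfl⟩
      exact ⟨∏ i, x i ^ ((α i : ℕ)), mon_mem_adjSet _, rfl⟩
    obtain ⟨f, hf, hfw⟩ := hle hw
    exact ⟨f, hf, hfw⟩
  -- h3
  have h3 : ∀ kk : Fin c, (∃ wv ∈ W, vord wv kk) ↔ (kk : ℕ) ∈ sgp (adjSet x c) := by
    intro kk
    constructor
    · rintro ⟨wv, hwv, hv⟩
      obtain ⟨f, hf, hfw⟩ := h2 wv hwv
      refine ⟨f, hf, ?_, ?_⟩
      · rw [show PowerSeries.coeff (kk : ℕ) f = wv kk from by rw [← hfw]; rfl]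
        exact hv.1
      · intro m hm
        have hmc : m < c := lt_trans hm kk.2
        rw [show PowerSeries.coeff m f = wv ⟨m, hmc⟩ from by rw [← hfw]; rfl]
        exact hv.2 ⟨m, hmc⟩ hm
    · rintro ⟨f, hf, hford⟩
      refine ⟨truncL c f, h1 f hf, hford.1, ?_⟩
      intro m hm
      exact hford.2 (m : ℕ) hm
  -- h4
  have h4 : ∀ kk : Fin c, (kk : ℕ) ∈ Γ → (∃ wv ∈ W, vord wv kk) := by
    intro kk hkk
    apply (h3 kk).mpr
    obtain ⟨α, hα⟩ := mem_gamma_rep hmin hkk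
    refine ⟨∏ i, x i ^ α i, mon_mem_adjSet _, ?_⟩
    rw [hα]
    exact mon_hasOrder hnf α
  constructor
  · -- sgp = Γ → finrank ≤ d
    intro hsgp
    have hwit : ∀ kk : ↥ΓF, ∃ wv, wv ∈ W ∧ vord wv (kk : Fin c) := by
      intro kk
      have : ((kk : Fin c) : ℕ) ∈ Γ := (Finset.mem_filter.mp kk.2).2
      obtain ⟨wv, hwv, hv⟩ := h4 _ this
      exact ⟨wv, hwv, hv⟩
    choose wfun hwfun using hwit
    have hspan : W ≤ Submodule.span ℂ (Set.range wfun) := by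
      apply span_of_vord hwfun
      intro kk hkk
      have : (kk : ℕ) ∈ sgp (adjSet x c) := (h3 kk).mp hkk
      rw [hsgp] at this
      exact Finset.mem_filter.mpr ⟨Finset.mem_univ _, this⟩
    calc finrank ℂ W ≤ finrank ℂ (Submodule.span ℂ (Set.range wfun)) :=
          Submodule.finrank_mono hspan
    _ ≤ (Set.range wfun).toFinset.card := finrank_span_le_card _
    _ ≤ ΓF.card := by
          rw [Set.toFinset_range]
          exact (Finset.card_image_le).trans (by simp)
  · -- finrank ≤ d → sgp = Γ
    intro hrank
    have hOG : ∀ kk : Fin c, (∃ wv ∈ W, vord wv kk) ↔ (kk : ℕ) ∈ Γ := by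
      intro k₀
      refine ⟨?_, h4 k₀⟩
      intro hk₀
      by_contra hk₀Γ
      have hk₀F : k₀ ∉ ΓF := fun h => hk₀Γ (Finset.mem_filter.mp h).2
      set s : Finset (Fin c) := insert k₀ ΓF with hs
      have hwitall : ∀ j : ↥s, ∃ wv, wv ∈ W ∧ vord wv (j : Fin c) := by
        intro j
        rcases Finset.mem_insert.mp j.2 with h | h
        · rw [h]; obtain ⟨wv, h1', h2'⟩ := hk₀; exact ⟨wv, h1', h2'⟩
        · exact h4 _ (Finset.mem_filter.mp h).2
      choose wfun hwfun using hwitall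
      have hind : LinearIndependent ℂ wfun := indep_of_vord fun j => (hwfun j).2
      have hind' : LinearIndependent ℂ (fun j : ↥s => (⟨wfun j, (hwfun j).1⟩ : ↥W)) := by
        apply LinearIndependent.of_comp (W.subtype)
        exact hind
      have hcard := hind'.fintype_card_le_finrank
      rw [Fintype.card_coe, hs, Finset.card_insert_of_notMem hk₀F] at hcard
      omega
    apply Set.ext
    intro n
    rcases Nat.lt_or_ge n c with hnc | hnc
    · have : n ∈ sgp (adjSet x c) ↔ (∃ wv ∈ W, vord wv ⟨n, hnc⟩) := (h3 ⟨n, hnc⟩).symm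
      exact this.trans (hOG ⟨n, hnc⟩)
    · constructor
      · intro _; exact hc1 n hnc
      · intro _
        refine ⟨(PowerSeries.X : PowerSeries ℂ) ^ n, ?_, hasOrder_X_pow n⟩
        refine ⟨0, (PowerSeries.X : PowerSeries ℂ) ^ (n - c), ?_⟩
        rw [map_zero, zero_add, ← pow_add]
        congr 1
        omega

lemma xfam_coeff_eq {x : Fin (g + 1) → PowerSeries ℂ} (hnf : NormalFormT Γ v x) :
    xfam Γ v (fun idx => PowerSeries.coeff idx.2.1 (x idx.1)) = x := by
  funext i
  ext m
  simp only [xfam, PowerSeries.coeff_mk]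
  split_ifs with h1 h2
  · rw [h1, (hnf i).1]
  · rfl
  · by_contra hne
    exact h2 ((hnf i).2 m h1 fun hz => hne hz.symm)

lemma xfam_mem_adjSet (u : GapIdx Γ v → ℂ) (i : Fin (g + 1)) :
    xfam Γ v u i ∈ adjSet (xfam Γ v u) c := by
  refine ⟨MvPolynomial.X i, 0, ?_⟩
  rw [MvPolynomial.aeval_X, mul_zero, add_zero]

lemma coeff_xfam_gap (hmin : MinGen Γ v) (u : GapIdx Γ v → ℂ) (i : Fin (g + 1))
    (δ : {δ : ℕ // δ ∉ Γ ∧ v i < δ}) :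
    PowerSeries.coeff δ.1 (xfam Γ v u i) = u ⟨i, δ⟩ := by
  simp only [xfam, PowerSeries.coeff_mk]
  have hne : δ.1 ≠ v i := fun h => δ.2.1 (by rw [h]; exact range_subset hmin i)
  rw [if_neg hne, dif_pos δ.2]

end Main

end S7

open S7

/-- there are finitely many polynomials `G j` in the coordinates of `ℂ^M`
such that the normal-form tuple associated to `u ∈ ℂ^M` generates a subalgebra with
semigroup `Γ` iff all `G j` vanish at `u`; consequently the set of closed
`ℂ`-subalgebras of `ℂ[[t]]` with semigroup `Γ` is in bijection with the points of the
affine variety `V(G₁,…,G_n) ⊆ ℂ^M`. -/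
theorem stmt7 (g : ℕ) (Γ : AddSubmonoid ℕ) (hfin : ((Γ : Set ℕ))ᶜ.Finite)
    (v : Fin (g + 1) → ℕ) (hmin : MinGen Γ v) (c : ℕ) (hc : IsConductor Γ c) :
    ∃ (n : ℕ) (G : Fin n → MvPolynomial (GapIdx Γ v) ℂ),
      (∀ u : GapIdx Γ v → ℂ,
        sgp (adjSet (xfam Γ v u) c) = (Γ : Set ℕ) ↔
          ∀ j, MvPolynomial.eval u (G j) = 0) ∧
      ∃ e : {R : Subalgebra ℂ (PowerSeries ℂ) //
              IsClosedSubalg R ∧ sgp (R : Set (PowerSeries ℂ)) = (Γ : Set ℕ)} ≃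
            {u : GapIdx Γ v → ℂ // ∀ j, MvPolynomial.eval u (G j) = 0},
        ∀ w : {u : GapIdx Γ v → ℂ // ∀ j, MvPolynomial.eval u (G j) = 0},
          ((e.symm w : Subalgebra ℂ (PowerSeries ℂ)) : Set (PowerSeries ℂ)) =
            adjSet (xfam Γ v w.val) c := by
  classical
  have hc1 : ∀ n, c ≤ n → n ∈ Γ := hc.1
  set d : ℕ := (Finset.univ.filter fun k : Fin c => (k : ℕ) ∈ Γ).card with hd
  set I : Type := (Fin (d + 1) → (Fin (g + 1) → Fin c)) × (Fin (d + 1) → Fin c) with hI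
  set n : ℕ := Fintype.card I with hn
  set enum : Fin n ≃ I := (Fintype.equivFin I).symm with henum
  set G : Fin n → MvPolynomial (GapIdx Γ v) ℂ :=
    fun j => Gdet Γ v c d (enum j).1 (enum j).2 with hG
  have hiff : ∀ u : GapIdx Γ v → ℂ,
      sgp (adjSet (xfam Γ v u) c) = (Γ : Set ℕ) ↔
        ∀ j, MvPolynomial.eval u (G j) = 0 := by
    intro u
    rw [key_iff hmin hc1 u, finrank_span_le_iff_det (yvec Γ v c u) d]
    constructor
    · intro h j
      rw [hG]
      rw [eval_Gdet]
      exact h (enum j).1 (enum j).2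
    · intro h σ τ
      have := h (enum.symm (σ, τ))
      rw [hG, eval_Gdet, Equiv.apply_symm_apply] at this
      exact this
  refine ⟨n, G, hiff, ?_⟩
  set A := {R : Subalgebra ℂ (PowerSeries ℂ) //
      IsClosedSubalg R ∧ sgp (R : Set (PowerSeries ℂ)) = (Γ : Set ℕ)} with hA
  set B := {u : GapIdx Γ v → ℂ // ∀ j, MvPolynomial.eval u (G j) = 0} with hB
  have hex : ∀ R : A, ∃ x : Fin (g + 1) → PowerSeries ℂ,
      (∀ i, x i ∈ R.1) ∧ NormalFormT Γ v x :=
    fun R => exists_nf R.2.1 R.2.2 hmin hc1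
  set nfx : A → (Fin (g + 1) → PowerSeries ℂ) := fun R => Classical.choose (hex R) with hnfx0
  have hnfx : ∀ R : A, (∀ i, nfx R i ∈ R.1) ∧ NormalFormT Γ v (nfx R) :=
    fun R => Classical.choose_spec (hex R)
  set uOf : A → (GapIdx Γ v → ℂ) :=
    fun R idx => PowerSeries.coeff idx.2.1 (nfx R idx.1) with huOf
  have hxfam_uOf : ∀ R : A, xfam Γ v (uOf R) = nfx R :=
    fun R => xfam_coeff_eq (hnfx R).2
  have hcar : ∀ R : A, (R.1 : Set (PowerSeries ℂ)) = adjSet (nfx R) c := fun R =>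
    subset_antisymm (subset_adjSet R.2.2 hmin (hnfx R).1 (hnfx R).2)
      (adjSet_subset R.2.1 R.2.2 hc1 (hnfx R).1)
  have hFmem : ∀ R : A, ∀ j, MvPolynomial.eval (uOf R) (G j) = 0 := by
    intro R
    apply (hiff (uOf R)).mp
    rw [hxfam_uOf R, ← hcar R]
    exact R.2.2
  set F : A → B := fun R => ⟨uOf R, hFmem R⟩ with hF
  set Fi : B → A := fun w => ⟨adjAlg (xfam Γ v w.1) c, adjAlg_closed _ _,
    (hiff w.1).mpr w.2⟩ with hFi
  have hleft : ∀ R : A, Fi (F R) = R := by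
    intro R
    apply Subtype.ext
    apply SetLike.coe_injective
    show adjSet (xfam Γ v (uOf R)) c = (R.1 : Set (PowerSeries ℂ))
    rw [hxfam_uOf R, hcar R]
  have hright : ∀ w : B, F (Fi w) = w := by
    intro w
    apply Subtype.ext
    have huniq : nfx (Fi w) = xfam Γ v w.1 := by
      apply nf_unique (Fi w).2.2 (hnfx (Fi w)).1
        (fun i => xfam_mem_adjSet w.1 i) (hnfx (Fi w)).2 (xfam_nf w.1)
    show uOf (Fi w) = w.1
    funext idx
    rcases idx with ⟨i, δ⟩
    show PowerSeries.coeff δ.1 (nfx (Fi w) i) = w.1 ⟨i, δ⟩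
    rw [huniq]
    exact coeff_xfam_gap hmin w.1 i δ
  refine ⟨⟨F, Fi, hleft, hright⟩, ?_⟩
  intro w
  rfl
end
end

section
/- Let Γ be a numerical semigroup minimally generated by two elements v₀ < v₁ (so v₀, v₁ are coprime and v₀ ≥ 2), with conductor c, and let M := #{gaps of Γ greater than v₀} + #{gaps of Γ greater than v₁}. Then for every pair (x₀, x₁) in normal form with respect to Γ, the ℂ-subalgebra R := ⟨x₀, x₁⟩ + t^c·ℂ[[t]] satisfies Γ_R = Γ; moreover the map sending the coefficient tuple in ℂ^M of a normal-form pair (x₀, x₁) to this subalgebra R is a bijection from ℂ^M onto the set of closed ℂ-subalgebras of ℂ[[t]] with semigroup Γ. -/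
noncomputable section

namespace S8

set_option linter.unusedSectionVars false
open PowerSeries

/-! ### Order basics -/

/-- order exactly `n` with leading coefficient `1` -/
def HO1 (f : PowerSeries ℂ) (n : ℕ) : Prop :=
  PowerSeries.coeff n f = 1 ∧ ∀ m < n, PowerSeries.coeff m f = 0

lemma HO1.hasOrder {f : PowerSeries ℂ} {n : ℕ} (h : HO1 f n) : HasOrder f n :=
  ⟨h.1 ▸ one_ne_zero, h.2⟩

lemma HO1.mul {f g : PowerSeries ℂ} {n m : ℕ} (hf : HO1 f n) (hg : HO1 g m) :
    HO1 (f * g) (n + m) := by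
  have key : ∀ i j : ℕ, i + j = n + m → (i ≠ n ∨ j ≠ m) →
      PowerSeries.coeff i f * PowerSeries.coeff j g = 0 := by
    intro i j hij hne
    rcases lt_or_ge i n with h | h
    · rw [hf.2 i h, zero_mul]
    · have : j < m := by omega
      rw [hg.2 j this, mul_zero]
  constructor
  · rw [PowerSeries.coeff_mul, Finset.sum_eq_single (n, m)]
    · rw [hf.1, hg.1, one_mul]
    · rintro ⟨i, j⟩ hij hne
      rw [Finset.HasAntidiagonal.mem_antidiagonal] at hij
      have : i ≠ n ∨ j ≠ m := by
        by_contra hcon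
        push_neg at hcon
        exact hne (by rw [hcon.1, hcon.2])
      exact key i j hij this
    · intro h; exact absurd (Finset.HasAntidiagonal.mem_antidiagonal.2 (rfl : n + m = n + m)) h
  · intro k hk
    rw [PowerSeries.coeff_mul]
    apply Finset.sum_eq_zero
    rintro ⟨i, j⟩ hij
    rw [Finset.HasAntidiagonal.mem_antidiagonal] at hij
    rcases lt_or_ge i n with h | h
    · rw [hf.2 i h, zero_mul]
    · have : j < m := by omega
      rw [hg.2 j this, mul_zero]

lemma HO1.one : HO1 (1 : PowerSeries ℂ) 0 :=
  ⟨by simp, by omega⟩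

lemma HO1.pow {f : PowerSeries ℂ} {n : ℕ} (hf : HO1 f n) (a : ℕ) : HO1 (f ^ a) (a * n) := by
  induction a with
  | zero => simpa using HO1.one
  | succ a ih =>
      have h := ih.mul hf
      have e : (a + 1) * n = a * n + n := by ring
      rw [pow_succ, e]
      exact h

/-! ### Arithmetic of the semigroup -/

variable {Γ : AddSubmonoid ℕ} {v : Fin 2 → ℕ} {c : ℕ}
  (hmin : MinGen Γ v) (hc : IsConductor Γ c)

section arith
include hmin

lemma range_v : Set.range v = {v 0, v 1} := by
  ext n
  constructor
  · rintro ⟨i, rfl⟩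
    fin_cases i <;> simp
  · rintro (rfl | rfl) <;> [exact ⟨0, rfl⟩; exact ⟨1, rfl⟩]

lemma hv01 : v 0 < v 1 := hmin.1 (by norm_num : (0 : Fin 2) < 1)

lemma mem_iff {n : ℕ} : n ∈ Γ ↔ ∃ a b : ℕ, a * v 0 + b * v 1 = n := by
  rw [← hmin.2.1, range_v hmin, AddSubmonoid.mem_closure_pair]
  simp [smul_eq_mul]

lemma v_mem (i : Fin 2) : v i ∈ Γ := by
  rw [← hmin.2.1]
  exact AddSubmonoid.subset_closure ⟨i, rfl⟩

lemma two_le_v0 : 2 ≤ v 0 := by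
  have h01 := hv01 hmin
  by_contra h
  push_neg at h
  interval_cases h0 : v 0
  · -- v 0 = 0
    apply hmin.2.2 {v 1}
    · rw [range_v hmin]
      constructor
      · intro x hx; right; exact hx
      · intro hsub
        have h1 : v 0 ∈ ({v 1} : Set ℕ) := hsub (Set.mem_insert _ _)
        simp only [Set.mem_singleton_iff] at h1
        omega
    · rw [← hmin.2.1, range_v hmin]
      apply le_antisymm
      · exact AddSubmonoid.closure_mono (by intro x hx; right; exact hx)
      · rw [AddSubmonoid.closure_le]
        rintro x (rfl | rfl)
        · rw [h0]; exact zero_mem _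
        · exact AddSubmonoid.subset_closure rfl
  · -- v 0 = 1
    apply hmin.2.2 {v 0}
    · rw [range_v hmin]
      constructor
      · intro x hx; left; exact hx
      · intro hsub
        have h1 : v 1 ∈ ({v 0} : Set ℕ) := hsub (Set.mem_insert_of_mem _ rfl)
        simp only [Set.mem_singleton_iff] at h1
        omega
    · rw [← hmin.2.1, range_v hmin]
      apply le_antisymm
      · exact AddSubmonoid.closure_mono (by intro x hx; left; exact hx)
      · rw [AddSubmonoid.closure_le]
        rintro x (rfl | rfl)
        · exact AddSubmonoid.subset_closure rfl
        · rw [SetLike.mem_coe, AddSubmonoid.mem_closure_singleton]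
          exact ⟨v 1, by rw [h0, smul_eq_mul, mul_one]⟩

include hc

lemma cop : Nat.Coprime (v 0) (v 1) := by
  set g := Nat.gcd (v 0) (v 1) with hg
  have hdvd : ∀ n ∈ Γ, g ∣ n := by
    intro n hn
    rw [mem_iff hmin] at hn
    obtain ⟨a, b, rfl⟩ := hn
    exact Dvd.dvd.add (Dvd.dvd.mul_left (Nat.gcd_dvd_left _ _) a)
      (Dvd.dvd.mul_left (Nat.gcd_dvd_right _ _) b)
  have hg1 : 1 ≤ g := by
    have h2 := two_le_v0 hmin
    have : g ∣ v 0 := Nat.gcd_dvd_left _ _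
    rcases Nat.eq_zero_or_pos g with h0 | h
    · rw [h0] at this; simp at this; omega
    · exact h
  have h1 : g ∣ c * g + 1 := hdvd _ (hc.1 _ (by nlinarith))
  have h2 : g ∣ c * g := Dvd.dvd.mul_left dvd_rfl c
  have : g ∣ 1 := (Nat.dvd_add_right h2).mp h1
  exact Nat.dvd_one.mp this

lemma frob : ∀ n, v 0 * v 1 ≤ n → n ∈ Γ := by
  intro n hn
  have h2 := two_le_v0 hmin
  have h01 := hv01 hmin
  have hfr := frobeniusNumber_pair (cop hmin hc) (by omega) (by omega)
  by_contra hne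
  have hmem : n ∈ {k | k ∉ AddSubmonoid.closure ({v 0, v 1} : Set ℕ)} := by
    simp only [Set.mem_setOf_eq]
    rw [← range_v hmin, hmin.2.1]
    exact hne
  have := hfr.2 hmem
  have hb : v 0 + v 1 ≤ v 0 * v 1 := Nat.add_le_mul (by omega) (by omega)
  omega

lemma cle : c ≤ v 0 * v 1 := by
  by_contra h
  push_neg at h
  obtain ⟨n, hn1, hn2⟩ := hc.2 (v 0 * v 1) h
  exact hn2 (frob hmin hc n hn1)

omit hmin in
lemma gap_lt {n : ℕ} (h : n ∉ Γ) : n < c := by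
  by_contra h'
  push_neg at h'
  exact h (hc.1 n h')

lemma winj {a b a' b' : ℕ} (hlt : a * v 0 + b * v 1 < c)
    (heq : a' * v 0 + b' * v 1 = a * v 0 + b * v 1) : a' = a ∧ b' = b := by
  have h2 := two_le_v0 hmin
  have h01 := hv01 hmin
  have hcl := cle hmin hc
  have hcop := cop hmin hc
  rcases eq_or_ne a' a with rfl | hne
  · refine ⟨rfl, ?_⟩; nlinarith
  · exfalso
    have hz : ((a' : ℤ) - a) * v 0 = ((b : ℤ) - b') * v 1 := by
      have := heq
      push_cast
      nlinarith [heq]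
    have hdvd : (v 1 : ℤ) ∣ ((a' : ℤ) - a) := by
      have hd : (v 1 : ℤ) ∣ ((a' : ℤ) - a) * v 0 := ⟨(b : ℤ) - b', by linarith⟩
      have hcop' : IsCoprime (v 1 : ℤ) (v 0 : ℤ) := by
        rw [Int.isCoprime_iff_gcd_eq_one]
        simpa [Nat.coprime_comm] using hcop.symm
      exact hcop'.dvd_of_dvd_mul_right hd
    obtain ⟨k, hk⟩ := hdvd
    have hane : (a' : ℤ) ≠ a := by exact_mod_cast hne
    have hk0 : k ≠ 0 := by rintro rfl; simp at hk; omega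
    rcases lt_or_gt_of_ne hk0 with hkneg | hkpos
    · -- a ≥ a' + v1
      have hzge : (a' : ℤ) + v 1 ≤ (a : ℤ) := by nlinarith
      have hge : a' + v 1 ≤ a := by exact_mod_cast hzge
      have h1 : v 1 * v 0 ≤ a * v 0 := Nat.mul_le_mul_right _ (by omega)
      have h2 : a * v 0 ≤ a * v 0 + b * v 1 := Nat.le_add_right _ _
      have h3 : v 0 * v 1 = v 1 * v 0 := Nat.mul_comm _ _
      omega
    · have hzge : (a : ℤ) + v 1 ≤ (a' : ℤ) := by nlinarith
      have hge : a + v 1 ≤ a' := by exact_mod_cast hzge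
      have h1 : v 1 * v 0 ≤ a' * v 0 := Nat.mul_le_mul_right _ (by omega)
      have h2 : a' * v 0 ≤ a' * v 0 + b' * v 1 := Nat.le_add_right _ _
      have h3 : v 0 * v 1 = v 1 * v 0 := Nat.mul_comm _ _
      omega

end arith

/-! ### Orders of polynomial expressions in a normal-form pair -/

/-- The weight (= order) of a monomial exponent. -/
def wt (v : Fin 2 → ℕ) (d : Fin 2 →₀ ℕ) : ℕ := d 0 * v 0 + d 1 * v 1

lemma mono_HO1 {x : Fin 2 → PowerSeries ℂ} {v : Fin 2 → ℕ}
    (hx : ∀ i, HO1 (x i) (v i)) (d : Fin 2 →₀ ℕ) :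
    HO1 (x 0 ^ d 0 * x 1 ^ d 1) (wt v d) := ((hx 0).pow (d 0)).mul ((hx 1).pow (d 1))

lemma coeff_aeval (x : Fin 2 → PowerSeries ℂ) (p : MvPolynomial (Fin 2) ℂ) (m : ℕ) :
    PowerSeries.coeff m (MvPolynomial.aeval x p) =
      ∑ d ∈ p.support, MvPolynomial.coeff d p *
        PowerSeries.coeff m (x 0 ^ d 0 * x 1 ^ d 1) := by
  conv_lhs => rw [MvPolynomial.as_sum p]
  rw [map_sum, map_sum]
  apply Finset.sum_congr rfl
  intro d _
  rw [MvPolynomial.aeval_monomial, Finsupp.prod_fintype _ _ (fun i => pow_zero _),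
    Fin.prod_univ_two, ← Algebra.smul_def, map_smul, smul_eq_mul]

/-- The key dichotomy: an evaluated polynomial either has all coefficients below `c`
vanishing, or it has exact order `n < c` for some `n ∈ Γ`. -/
lemma key (hmin : MinGen Γ v) (hc : IsConductor Γ c)
    {x : Fin 2 → PowerSeries ℂ} (hx : ∀ i, HO1 (x i) (v i))
    (p : MvPolynomial (Fin 2) ℂ) :
    (∀ m < c, PowerSeries.coeff m (MvPolynomial.aeval x p) = 0) ∨
    ∃ n, n < c ∧ n ∈ Γ ∧ HasOrder (MvPolynomial.aeval x p) n := by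
  classical
  set S' := p.support.filter (fun d => wt v d < c) with hS'
  by_cases hS : S'.Nonempty
  · right
    have hne : (S'.image (wt v)).Nonempty := hS.image _
    set n := (S'.image (wt v)).min' hne with hn
    have hnmem : n ∈ S'.image (wt v) := Finset.min'_mem _ _
    obtain ⟨dstar, hdstar, hwd⟩ := Finset.mem_image.mp hnmem
    have hdsup : dstar ∈ p.support := (Finset.mem_filter.mp hdstar).1
    have hnc : n < c := hwd ▸ (Finset.mem_filter.mp hdstar).2
    have hminle : ∀ d ∈ S', n ≤ wt v d := fun d hd =>
      Finset.min'_le _ _ (Finset.mem_image_of_mem _ hd)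
    have hlow : ∀ d ∈ p.support, ∀ m < n, PowerSeries.coeff m (x 0 ^ d 0 * x 1 ^ d 1) = 0 := by
      intro d hd m hm
      apply (mono_HO1 hx d).2
      by_cases hdc : wt v d < c
      · exact lt_of_lt_of_le hm (hminle d (Finset.mem_filter.mpr ⟨hd, hdc⟩))
      · omega
    refine ⟨n, hnc, ?_, ?_, ?_⟩
    · exact (mem_iff hmin).mpr ⟨dstar 0, dstar 1, hwd⟩
    · rw [coeff_aeval, Finset.sum_eq_single dstar]
      · have h1 : PowerSeries.coeff n (x 0 ^ dstar 0 * x 1 ^ dstar 1) = 1 := by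
          rw [← hwd]; exact (mono_HO1 hx dstar).1
        rw [h1, mul_one]
        exact MvPolynomial.mem_support_iff.mp hdsup
      · intro d hd hdne
        have : n < wt v d ∨ c ≤ wt v d := by
          rcases lt_or_ge (wt v d) c with h | h
          · left
            rcases lt_or_ge n (wt v d) with h' | h'
            · exact h'
            · exfalso
              have hle : n ≤ wt v d := hminle d (Finset.mem_filter.mpr ⟨hd, h⟩)
              have : wt v d = n := le_antisymm h' hle
              have := winj hmin hc (a := dstar 0) (b := dstar 1) (a' := d 0) (b' := d 1)
                (by unfold wt at hwd; omega) (by unfold wt at this hwd; omega)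
              exact hdne (Finsupp.ext fun i => by fin_cases i <;> simp [this.1, this.2])
          · right; exact h
        have hcz : PowerSeries.coeff n (x 0 ^ d 0 * x 1 ^ d 1) = 0 := by
          apply (mono_HO1 hx d).2
          omega
        rw [hcz, mul_zero]
      · intro h; exact absurd hdsup h
    · intro m hm
      rw [coeff_aeval]
      exact Finset.sum_eq_zero fun d hd => by rw [hlow d hd m hm, mul_zero]
  · left
    intro m hm
    rw [coeff_aeval]
    apply Finset.sum_eq_zero
    intro d hd
    have : ¬ wt v d < c := by
      intro hlt
      exact hS ⟨d, Finset.mem_filter.mpr ⟨hd, hlt⟩⟩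
    rw [(mono_HO1 hx d).2 m (by omega), mul_zero]

/-! ### The subalgebra generated by a pair plus a tail ideal -/

def adjAlg {k : ℕ} (x : Fin k → PowerSeries ℂ) (c : ℕ) : Subalgebra ℂ (PowerSeries ℂ) where
  carrier := adjSet x c
  add_mem' := by
    rintro a b ⟨p, h, rfl⟩ ⟨p', h', rfl⟩
    exact ⟨p + p', h + h', by rw [map_add]; ring⟩
  mul_mem' := by
    rintro a b ⟨p, h, rfl⟩ ⟨p', h', rfl⟩
    refine ⟨p * p', MvPolynomial.aeval x p * h' + MvPolynomial.aeval x p' * h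
      + X ^ c * (h * h'), by rw [map_mul]; ring⟩
  algebraMap_mem' := fun r => ⟨MvPolynomial.C r, 0, by simp⟩

lemma coe_adjAlg {k : ℕ} (x : Fin k → PowerSeries ℂ) (c : ℕ) :
    (adjAlg x c : Set (PowerSeries ℂ)) = adjSet x c := rfl

lemma mem_adjSet_of_low_zero {k : ℕ} {x : Fin k → PowerSeries ℂ} {c : ℕ} {f : PowerSeries ℂ}
    (hf : ∀ m < c, PowerSeries.coeff m f = 0) : f ∈ adjSet x c := by
  obtain ⟨h, rfl⟩ := (PowerSeries.X_pow_dvd_iff).mpr hf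
  exact ⟨0, h, by simp⟩

lemma aeval_mem_adjSet {k : ℕ} (x : Fin k → PowerSeries ℂ) (c : ℕ) (p : MvPolynomial (Fin k) ℂ) :
    MvPolynomial.aeval x p ∈ adjSet x c := ⟨p, 0, by simp⟩

lemma x_mem_adjSet {k : ℕ} (x : Fin k → PowerSeries ℂ) (c : ℕ) (i : Fin k) :
    x i ∈ adjSet x c := by
  have := aeval_mem_adjSet x c (MvPolynomial.X i)
  simpa using this

lemma adjAlg_closed {k : ℕ} (x : Fin k → PowerSeries ℂ) (c : ℕ) :
    IsClosedSubalg (adjAlg x c) := by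
  intro f hf
  obtain ⟨g, hg, hfg⟩ := hf c
  obtain ⟨p, h, rfl⟩ := hg
  obtain ⟨h', hh'⟩ := (PowerSeries.X_pow_dvd_iff).mpr hfg
  refine ⟨p, h + h', ?_⟩
  have : f - (MvPolynomial.aeval x p + X ^ c * h) = X ^ c * h' := hh'
  rw [mul_add]
  linear_combination this

lemma coeff_Xc_mul {c m : ℕ} (h : PowerSeries ℂ) (hm : m < c) :
    PowerSeries.coeff m ((PowerSeries.X : PowerSeries ℂ) ^ c * h) = 0 :=
  (PowerSeries.X_pow_dvd_iff).mp (dvd_mul_right _ _) m hm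

lemma nf_HO1 {x : Fin 2 → PowerSeries ℂ} (hx : NormalFormT Γ v x) (i : Fin 2) :
    HO1 (x i) (v i) := by
  refine ⟨(hx i).1, fun m hm => ?_⟩
  by_contra hne
  have := (hx i).2 m (by omega) hne
  omega

/-- Part 1: the semigroup of `adjSet x c` is `Γ`. -/
lemma part1 (hmin : MinGen Γ v) (hc : IsConductor Γ c)
    {x : Fin 2 → PowerSeries ℂ} (hx : ∀ i, HO1 (x i) (v i)) :
    sgp (adjSet x c) = (Γ : Set ℕ) := by
  ext n
  constructor
  · rintro ⟨f, ⟨p, h, rfl⟩, hord⟩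
    rcases lt_or_ge n c with hn | hn
    · -- transfer coefficients below c to the aeval part
      have htr : ∀ m < c, PowerSeries.coeff m (MvPolynomial.aeval x p + X ^ c * h)
          = PowerSeries.coeff m (MvPolynomial.aeval x p) := by
        intro m hm
        rw [map_add, coeff_Xc_mul h hm, add_zero]
      rcases key hmin hc hx p with hz | ⟨n', hn'c, hn'Γ, hord'⟩
      · exfalso
        exact hord.1 ((htr n hn).trans (hz n hn))
      · have h1 : n ≤ n' := by
          by_contra hlt
          push_neg at hlt
          exact hord'.1 ((htr n' hn'c).symm.trans (hord.2 n' hlt))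
        have h2 : n' ≤ n := by
          by_contra hlt
          push_neg at hlt
          exact hord.1 ((htr n hn).trans (hord'.2 n hlt))
        have : n = n' := le_antisymm h1 h2
        rw [this]; exact hn'Γ
    · exact hc.1 n hn
  · intro hn
    obtain ⟨a, b, hab⟩ := (mem_iff hmin).mp hn
    refine ⟨x 0 ^ a * x 1 ^ b, ?_, ?_⟩
    · have := aeval_mem_adjSet x c (MvPolynomial.X 0 ^ a * MvPolynomial.X 1 ^ b)
      simpa [map_mul, map_pow] using this
    · have := ((hx 0).pow a).mul ((hx 1).pow b)
      rw [hab] at this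
      exact this.hasOrder

/-! ### Closed subalgebras with semigroup `Γ` -/

lemma mem_sgp {R : Subalgebra ℂ (PowerSeries ℂ)} {f : PowerSeries ℂ} {n : ℕ}
    (hf : f ∈ R) (h : HasOrder f n) : n ∈ sgp (R : Set (PowerSeries ℂ)) :=
  ⟨f, hf, h⟩

/-- In a closed subalgebra with semigroup `Γ`, every series supported in degrees `≥ c`
belongs to the subalgebra. -/
lemma tail_mem (hc : IsConductor Γ c) {R : Subalgebra ℂ (PowerSeries ℂ)}
    (hcl : IsClosedSubalg R) (hs : sgp (R : Set (PowerSeries ℂ)) = (Γ : Set ℕ))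
    {f : PowerSeries ℂ} (hf : ∀ m < c, PowerSeries.coeff m f = 0) : f ∈ R := by
  apply hcl
  intro N
  induction N with
  | zero => exact ⟨0, zero_mem R, fun m hm => absurd hm (by omega)⟩
  | succ N ih =>
    obtain ⟨g, hgR, hg⟩ := ih
    by_cases hz : PowerSeries.coeff N (f - g) = 0
    · refine ⟨g, hgR, fun m hm => ?_⟩
      rcases lt_or_eq_of_le (Nat.lt_succ_iff.mp hm) with h | rfl
      · exact hg m h
      · exact hz
    · have hNΓ : N ∈ Γ := by
        rcases lt_or_ge N c with h | h
        · have hfN : PowerSeries.coeff N f = 0 := hf N h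
          have hgN : PowerSeries.coeff N g ≠ 0 := by
            intro h0
            apply hz
            rw [map_sub, hfN, h0, sub_zero]
          have hord : HasOrder g N := by
            refine ⟨hgN, fun m hm => ?_⟩
            have h1 := hg m hm
            have h2 := hf m (by omega)
            rw [map_sub, h2, zero_sub, neg_eq_zero] at h1
            exact h1
          have : N ∈ sgp (R : Set (PowerSeries ℂ)) := mem_sgp hgR hord
          rwa [hs] at this
        · exact hc.1 N h
      have : N ∈ sgp (R : Set (PowerSeries ℂ)) := by rw [hs]; exact hNΓ
      obtain ⟨w, hwR, hw⟩ := this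
      set lam := PowerSeries.coeff N (f - g) / PowerSeries.coeff N w with hlam
      refine ⟨g + lam • w, add_mem hgR (SMulMemClass.smul_mem lam hwR), fun m hm => ?_⟩
      have hco : PowerSeries.coeff m (f - (g + lam • w)) =
          PowerSeries.coeff m (f - g) - lam * PowerSeries.coeff m w := by
        rw [map_sub, map_add, map_smul, smul_eq_mul, map_sub]
        ring
      rcases lt_or_eq_of_le (Nat.lt_succ_iff.mp hm) with h | rfl
      · rw [hco, hg m h, hw.2 m h, mul_zero, sub_zero]
      · rw [hco, hlam, div_mul_cancel₀ _ hw.1, sub_self]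

/-- In a closed subalgebra with semigroup `Γ`, there is a normal-form element of each
order `v i`. -/
lemma exists_nf_component (hmin : MinGen Γ v) (hc : IsConductor Γ c)
    {R : Subalgebra ℂ (PowerSeries ℂ)}
    (hcl : IsClosedSubalg R) (hs : sgp (R : Set (PowerSeries ℂ)) = (Γ : Set ℕ)) (i : Fin 2) :
    ∃ g ∈ R, PowerSeries.coeff (v i) g = 1 ∧ (∀ m < v i, PowerSeries.coeff m g = 0) ∧
      ∀ m, m ≠ v i → PowerSeries.coeff m g ≠ 0 → m ∉ Γ ∧ v i < m := by
  have main : ∀ M : ℕ, ∃ g ∈ R, PowerSeries.coeff (v i) g = 1 ∧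
      (∀ m < v i, PowerSeries.coeff m g = 0) ∧
      (∀ m, v i < m → m < M → m ∈ Γ → PowerSeries.coeff m g = 0) := by
    intro M
    induction M with
    | zero =>
      have : v i ∈ sgp (R : Set (PowerSeries ℂ)) := by rw [hs]; exact v_mem hmin i
      obtain ⟨f, hfR, hf⟩ := this
      refine ⟨(PowerSeries.coeff (v i) f)⁻¹ • f,
        SMulMemClass.smul_mem _ hfR, ?_, ?_, fun m _ hm _ => absurd hm (by omega)⟩
      · rw [map_smul, smul_eq_mul, inv_mul_cancel₀ hf.1]
      · intro m hm
        rw [map_smul, smul_eq_mul, hf.2 m hm, mul_zero]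
    | succ M ih =>
      obtain ⟨g, hgR, h1, h2, h3⟩ := ih
      by_cases hcase : v i < M ∧ M ∈ Γ ∧ PowerSeries.coeff M g ≠ 0
      · obtain ⟨hvM, hMΓ, hMg⟩ := hcase
        have : M ∈ sgp (R : Set (PowerSeries ℂ)) := by rw [hs]; exact hMΓ
        obtain ⟨w, hwR, hw⟩ := this
        set lam := PowerSeries.coeff M g / PowerSeries.coeff M w with hlam
        refine ⟨g - lam • w, sub_mem hgR (SMulMemClass.smul_mem lam hwR), ?_, ?_, ?_⟩
        · rw [map_sub, map_smul, smul_eq_mul, hw.2 (v i) hvM, mul_zero, sub_zero, h1]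
        · intro m hm
          rw [map_sub, map_smul, smul_eq_mul, hw.2 m (by omega), mul_zero, sub_zero]
          exact h2 m hm
        · intro m hvm hmM hmΓ
          rcases lt_or_eq_of_le (Nat.lt_succ_iff.mp hmM) with h | rfl
          · rw [map_sub, map_smul, smul_eq_mul, hw.2 m h, mul_zero, sub_zero]
            exact h3 m hvm h hmΓ
          · rw [map_sub, map_smul, smul_eq_mul, hlam, div_mul_cancel₀ _ hw.1, sub_self]
      · refine ⟨g, hgR, h1, h2, fun m hvm hmM hmΓ => ?_⟩
        rcases lt_or_eq_of_le (Nat.lt_succ_iff.mp hmM) with h | rfl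
        · exact h3 m hvm h hmΓ
        · push_neg at hcase
          exact hcase hvm hmΓ
  obtain ⟨g, hgR, h1, h2, h3⟩ := main c
  set tail := PowerSeries.mk (fun m =>
    if m ≤ v i ∨ m < c then 0 else PowerSeries.coeff m g) with htail
  have htailR : tail ∈ R := by
    apply tail_mem hc hcl hs
    intro m hm
    rw [htail, PowerSeries.coeff_mk, if_pos (Or.inr hm)]
  refine ⟨g - tail, sub_mem hgR htailR, ?_, ?_, ?_⟩
  · rw [map_sub, htail, PowerSeries.coeff_mk, if_pos (Or.inl le_rfl), sub_zero, h1]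
  · intro m hm
    rw [map_sub, htail, PowerSeries.coeff_mk, if_pos (Or.inl (le_of_lt hm)), sub_zero]
    exact h2 m hm
  · intro m hmv hm0
    rcases lt_trichotomy m (v i) with h | h | h
    · exfalso
      apply hm0
      rw [map_sub, htail, PowerSeries.coeff_mk, if_pos (Or.inl (le_of_lt h)), sub_zero]
      exact h2 m h
    · exact absurd h hmv
    · refine ⟨?_, h⟩
      intro hmΓ
      apply hm0
      rcases lt_or_ge m c with hmc | hmc
      · rw [map_sub, htail, PowerSeries.coeff_mk, if_pos (Or.inr hmc), sub_zero]
        exact h3 m h hmc hmΓ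
      · rw [map_sub, htail, PowerSeries.coeff_mk, if_neg (by omega), sub_self]

/-- Every element of a subalgebra with semigroup `Γ` lies in `adjSet x c`, for any
normal-form tuple `x` (only the orders matter). -/
lemma R_sub_adj (hmin : MinGen Γ v) (hc : IsConductor Γ c)
    {R : Subalgebra ℂ (PowerSeries ℂ)} (hs : sgp (R : Set (PowerSeries ℂ)) = (Γ : Set ℕ))
    {x : Fin 2 → PowerSeries ℂ} (hx : ∀ i, HO1 (x i) (v i)) (hxR : ∀ i, x i ∈ R) :
    (R : Set (PowerSeries ℂ)) ⊆ adjSet x c := by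
  suffices H : ∀ d : ℕ, ∀ f : PowerSeries ℂ, f ∈ R →
      (∀ m, m + d < c → PowerSeries.coeff m f = 0) → f ∈ adjSet x c by
    intro f hf
    exact H c f hf (fun m hm => absurd hm (by omega))
  intro d
  induction d with
  | zero =>
    intro f hfR hlow
    exact mem_adjSet_of_low_zero (fun m hm => hlow m (by omega))
  | succ d ih =>
    intro f hfR hlow
    rcases lt_or_ge (c : ℕ) (d + 1) with hcd | hcd
    · exact ih f hfR (fun m hm => hlow m (by omega))
    · set n := c - (d + 1) with hn
      by_cases hz : PowerSeries.coeff n f = 0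
      · apply ih f hfR
        intro m hm
        rcases lt_or_ge m n with h | h
        · exact hlow m (by omega)
        · have : m = n := by omega
          rw [this]; exact hz
      · have hord : HasOrder f n := ⟨hz, fun m hm => hlow m (by omega)⟩
        have hnΓ : n ∈ Γ := by
          have : n ∈ sgp (R : Set (PowerSeries ℂ)) := mem_sgp hfR hord
          rwa [hs] at this
        obtain ⟨a, b, hab⟩ := (mem_iff hmin).mp hnΓ
        set mono := x 0 ^ a * x 1 ^ b with hmono
        have hmHO : HO1 mono n := by
          have := ((hx 0).pow a).mul ((hx 1).pow b)
          rwa [hab] at this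
        set lam := PowerSeries.coeff n f with hlam
        have hmR : mono ∈ adjAlg x c :=
          mul_mem (pow_mem (x_mem_adjSet x c 0) a) (pow_mem (x_mem_adjSet x c 1) b)
        have hrest : f - lam • mono ∈ R :=
          sub_mem hfR (SMulMemClass.smul_mem lam (mul_mem (pow_mem (hxR 0) a) (pow_mem (hxR 1) b)))
        have hrestlow : ∀ m, m + d < c → PowerSeries.coeff m (f - lam • mono) = 0 := by
          intro m hm
          rw [map_sub, map_smul, smul_eq_mul]
          rcases lt_or_ge m n with h | h
          · rw [hlow m (by omega), hmHO.2 m h, mul_zero, sub_zero]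
          · have : m = n := by omega
            rw [this, hmHO.1, mul_one, hlam, sub_self]
        have h1 : f - lam • mono ∈ adjAlg x c := ih _ hrest hrestlow
        have h2 : lam • mono ∈ adjAlg x c := SMulMemClass.smul_mem lam hmR
        have : (f - lam • mono) + lam • mono ∈ adjAlg x c := add_mem h1 h2
        rwa [sub_add_cancel] at this

lemma adj_sub_R (hc : IsConductor Γ c) {R : Subalgebra ℂ (PowerSeries ℂ)}
    (hcl : IsClosedSubalg R) (hs : sgp (R : Set (PowerSeries ℂ)) = (Γ : Set ℕ))
    {x : Fin 2 → PowerSeries ℂ} (hxR : ∀ i, x i ∈ R) :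
    adjSet x c ⊆ (R : Set (PowerSeries ℂ)) := by
  rintro f ⟨p, h, rfl⟩
  apply add_mem
  · have : ∀ q : MvPolynomial (Fin 2) ℂ, MvPolynomial.aeval x q ∈ R := by
      intro q
      induction q using MvPolynomial.induction_on with
      | C r => rw [MvPolynomial.aeval_C]; exact R.algebraMap_mem r
      | add q q' hq hq' => rw [map_add]; exact add_mem hq hq'
      | mul_X q i hq => rw [map_mul, MvPolynomial.aeval_X]; exact mul_mem hq (hxR i)
    exact this p
  · exact tail_mem hc hcl hs (fun m hm => coeff_Xc_mul h hm)

/-- Injectivity: two normal-form pairs generating the same `adjSet` are equal. -/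
lemma adj_inj (hmin : MinGen Γ v) (hc : IsConductor Γ c)
    {x x' : Fin 2 → PowerSeries ℂ} (hx : NormalFormT Γ v x) (hx' : NormalFormT Γ v x')
    (heq : adjSet x c = adjSet x' c) : x = x' := by
  funext i
  have hmem : x' i ∈ adjSet x c := heq ▸ x_mem_adjSet x' c i
  obtain ⟨p, h, hxp⟩ := hmem
  set q := p - MvPolynomial.X i with hq
  set D := x' i - x i with hD
  have haq : MvPolynomial.aeval x q = D - X ^ c * h := by
    rw [hq, map_sub, MvPolynomial.aeval_X, hD, hxp]
    ring
  have hDco : ∀ m < c, PowerSeries.coeff m (MvPolynomial.aeval x q) =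
      PowerSeries.coeff m D := by
    intro m hm
    rw [haq, map_sub, coeff_Xc_mul h hm, sub_zero]
  have hDsupp : ∀ m, PowerSeries.coeff m D ≠ 0 → m ∉ Γ ∧ v i < m := by
    intro m hm
    rcases eq_or_ne m (v i) with rfl | hne
    · exfalso
      apply hm
      rw [hD, map_sub, (hx' i).1, (hx i).1, sub_self]
    · have : PowerSeries.coeff m (x' i) ≠ 0 ∨ PowerSeries.coeff m (x i) ≠ 0 := by
        by_contra hcon
        push_neg at hcon
        apply hm
        rw [hD, map_sub, hcon.1, hcon.2, sub_self]
      rcases this with h' | h'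
      · exact (hx' i).2 m hne h'
      · exact (hx i).2 m hne h'
  have hD0 : D = 0 := by
    rcases key hmin hc (fun j => nf_HO1 hx j) q with hz | ⟨n, hnc, hnΓ, hord⟩
    · ext m
      rw [map_zero]
      rcases lt_or_ge m c with hm | hm
      · rw [← hDco m hm]; exact hz m hm
      · by_contra hne
        exact (hDsupp m hne).1 (hc.1 m hm)
    · exfalso
      have : PowerSeries.coeff n D ≠ 0 := by rw [← hDco n hnc]; exact hord.1
      exact (hDsupp n this).1 hnΓ
  have := sub_eq_zero.mp (hD ▸ hD0)
  exact this.symm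

/-! ### Properties of `xfam` -/

lemma xfam_nf (u : GapIdx Γ v → ℂ) : NormalFormT Γ v (xfam Γ v u) := by
  intro i
  constructor
  · rw [xfam, PowerSeries.coeff_mk, if_pos rfl]
  · intro m hmv hm
    rw [xfam, PowerSeries.coeff_mk, if_neg hmv] at hm
    by_contra hcon
    rw [dif_neg hcon] at hm
    exact hm rfl

lemma xfam_recover (hmin : MinGen Γ v) (u : GapIdx Γ v → ℂ) (i : Fin 2) {δ : ℕ}
    (hδ : δ ∉ Γ ∧ v i < δ) :
    PowerSeries.coeff δ (xfam Γ v u i) = u ⟨i, ⟨δ, hδ⟩⟩ := by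
  have hne : δ ≠ v i := fun h => hδ.1 (h ▸ v_mem hmin i)
  rw [xfam, PowerSeries.coeff_mk, if_neg hne, dif_pos hδ]

lemma xfam_eq {x : Fin 2 → PowerSeries ℂ} (hx : NormalFormT Γ v x) :
    xfam Γ v (fun g => PowerSeries.coeff (g.2 : ℕ) (x g.1)) = x := by
  funext i
  ext m
  rw [xfam, PowerSeries.coeff_mk]
  split_ifs with h1 h2
  · rw [h1, (hx i).1]
  · rfl
  · by_contra hcon
    exact h2 ((hx i).2 m h1 (fun h => hcon h.symm))

end S8

/-- for a numerical semigroup `Γ` minimally generated by two elements, every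
normal-form pair generates a subalgebra with semigroup `Γ`, and the natural map
`ℂ^M → {closed ℂ-subalgebras of ℂ[[t]] with semigroup Γ}` sending a coefficient tuple to
the corresponding subalgebra is a bijection. -/
theorem stmt8 (Γ : AddSubmonoid ℕ) (hfin : ((Γ : Set ℕ))ᶜ.Finite)
    (v : Fin 2 → ℕ) (hmin : MinGen Γ v) (c : ℕ) (hc : IsConductor Γ c) :
    (∀ x : Fin 2 → PowerSeries ℂ, NormalFormT Γ v x →
      sgp (adjSet x c) = (Γ : Set ℕ)) ∧
    ∃ e : (GapIdx Γ v → ℂ) ≃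
        {R : Subalgebra ℂ (PowerSeries ℂ) //
          IsClosedSubalg R ∧ sgp (R : Set (PowerSeries ℂ)) = (Γ : Set ℕ)},
      ∀ u : GapIdx Γ v → ℂ,
        ((e u : Subalgebra ℂ (PowerSeries ℂ)) : Set (PowerSeries ℂ)) =
          adjSet (xfam Γ v u) c := by
  have hnf1 : ∀ x : Fin 2 → PowerSeries ℂ, NormalFormT Γ v x →
      sgp (adjSet x c) = (Γ : Set ℕ) := fun x hx => S8.part1 hmin hc (S8.nf_HO1 hx)
  refine ⟨hnf1, ?_⟩
  classical
  set F : (GapIdx Γ v → ℂ) →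
      {R : Subalgebra ℂ (PowerSeries ℂ) //
        IsClosedSubalg R ∧ sgp (R : Set (PowerSeries ℂ)) = (Γ : Set ℕ)} :=
    fun u => ⟨S8.adjAlg (xfam Γ v u) c, S8.adjAlg_closed _ _,
      by rw [S8.coe_adjAlg]; exact hnf1 _ (S8.xfam_nf u)⟩ with hF
  have hinj : Function.Injective F := by
    intro u u' huu
    have hcar : adjSet (xfam Γ v u) c = adjSet (xfam Γ v u') c := by
      have h1 : ((F u : Subalgebra ℂ (PowerSeries ℂ)) : Set (PowerSeries ℂ)) =
          ((F u' : Subalgebra ℂ (PowerSeries ℂ)) : Set (PowerSeries ℂ)) := by rw [huu]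
      rwa [hF] at h1
    have hx := S8.adj_inj hmin hc (S8.xfam_nf u) (S8.xfam_nf u') hcar
    funext g
    obtain ⟨i, δ, hδ⟩ := g
    calc u ⟨i, ⟨δ, hδ⟩⟩ = PowerSeries.coeff δ (xfam Γ v u i) :=
          (S8.xfam_recover hmin u i hδ).symm
      _ = PowerSeries.coeff δ (xfam Γ v u' i) := by rw [hx]
      _ = u' ⟨i, ⟨δ, hδ⟩⟩ := S8.xfam_recover hmin u' i hδ
  have hsurj : Function.Surjective F := by
    rintro ⟨R, hcl, hs⟩
    obtain ⟨g0, hg0R, hg01, hg02, hg03⟩ := S8.exists_nf_component hmin hc hcl hs 0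
    obtain ⟨g1, hg1R, hg11, hg12, hg13⟩ := S8.exists_nf_component hmin hc hcl hs 1
    set x : Fin 2 → PowerSeries ℂ := ![g0, g1] with hxdef
    have hxR : ∀ i, x i ∈ R := by
      intro i
      fin_cases i
      · simpa [hxdef] using hg0R
      · simpa [hxdef] using hg1R
    have hxnf : NormalFormT Γ v x := by
      intro i
      fin_cases i
      · exact ⟨by simpa [hxdef] using hg01, by simpa [hxdef] using hg03⟩
      · exact ⟨by simpa [hxdef] using hg11, by simpa [hxdef] using hg13⟩
    set u : GapIdx Γ v → ℂ := fun g => PowerSeries.coeff (g.2 : ℕ) (x g.1) with hu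
    have hxf : xfam Γ v u = x := S8.xfam_eq hxnf
    refine ⟨u, ?_⟩
    apply Subtype.ext
    apply SetLike.coe_injective
    show (S8.adjAlg (xfam Γ v u) c : Set (PowerSeries ℂ)) = (R : Set (PowerSeries ℂ))
    rw [S8.coe_adjAlg, hxf]
    exact Set.Subset.antisymm (S8.adj_sub_R hc hcl hs hxR)
      (S8.R_sub_adj hmin hc hs (S8.nf_HO1 hxnf) hxR)
  exact ⟨Equiv.ofBijective F ⟨hinj, hsurj⟩, fun u => rfl⟩
end
end

section
/- Let Γ be a numerical semigroup minimally generated by v₀ < ⋯ < v_g with conductor c, and let M := Σ_{i=0}^{g} #{gaps of Γ greater than v_i}. Suppose there is exactly one two-element set {a, b} of vectors in ℕ^{g+1} with a ≠ b and Σᵢ aᵢvᵢ = Σᵢ bᵢvᵢ < c, and let d denote this common value Σᵢ aᵢvᵢ. Then the set of closed ℂ-subalgebras of ℂ[[t]] with semigroup Γ is in bijection with ℂ^N, where N := M − #{gaps of Γ greater than d}. -/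
noncomputable section

noncomputable section
open PowerSeries

lemma auxWeightMem (Γ : AddSubmonoid ℕ) {k : ℕ} (v : Fin k → ℕ)
    (hv : AddSubmonoid.closure (Set.range v) = Γ)
    (d : Fin k → ℕ) : ∑ i, d i * v i ∈ Γ := by
  rw [← hv]
  refine AddSubmonoid.sum_mem _ (fun i _ => ?_)
  have := AddSubmonoid.nsmul_mem (S := AddSubmonoid.closure (Set.range v))
    (AddSubmonoid.subset_closure (Set.mem_range_self i)) (d i)
  simpa [smul_eq_mul] using this

lemma auxRep (Γ : AddSubmonoid ℕ) {k : ℕ} (v : Fin k → ℕ)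
    (hv : AddSubmonoid.closure (Set.range v) = Γ)
    {n : ℕ} (hn : n ∈ Γ) : ∃ d : Fin k → ℕ, ∑ i, d i * v i = n := by
  rw [← hv] at hn
  induction hn using AddSubmonoid.closure_induction with
  | mem x hx =>
      obtain ⟨i, rfl⟩ := hx
      exact ⟨Pi.single i 1, by simp [Pi.single_apply, Finset.sum_ite_eq']⟩
  | zero => exact ⟨0, by simp⟩
  | add x y _ _ hx hy =>
      obtain ⟨d1, h1⟩ := hx; obtain ⟨d2, h2⟩ := hy
      exact ⟨d1 + d2, by simp [add_mul, Finset.sum_add_distrib, h1, h2]⟩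

/-- Minimal generators are positive. -/
lemma auxVPos (Γ : AddSubmonoid ℕ) {k : ℕ} (v : Fin k → ℕ) (hsm : StrictMono v) (hclos : AddSubmonoid.closure (Set.range v) = Γ) (hminimal : ∀ s : Set ℕ, s ⊂ Set.range v → AddSubmonoid.closure s ≠ Γ)
    (i : Fin k) : 1 ≤ v i := by
  by_contra h
  have hvi : v i = 0 := by omega
  have h0 : (0 : ℕ) ∈ Set.range v := ⟨i, hvi⟩
  set s : Set ℕ := Set.range v \ {0} with hs
  have hss : s ⊂ Set.range v := ⟨Set.diff_subset, fun hsub => by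
    have := hsub h0
    simp [hs] at this⟩
  apply hminimal s hss
  rw [← hclos]
  apply le_antisymm
  · exact AddSubmonoid.closure_mono Set.diff_subset
  · rw [AddSubmonoid.closure_le]
    intro x hx
    by_cases hx0 : x = 0
    · subst hx0; exact AddSubmonoid.zero_mem _
    · exact AddSubmonoid.subset_closure ⟨hx, hx0⟩

/-- unique representation of `v 0`. -/
lemma auxUniqueRep {k : ℕ} (v : Fin (k+1) → ℕ) (hsm : StrictMono v)
    (hv1 : ∀ i, 1 ≤ v i) (d : Fin (k+1) → ℕ) (hd : ∑ i, d i * v i = v 0) :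
    d = Pi.single 0 1 := by
  have hz : ∀ i, i ≠ 0 → d i = 0 := by
    intro i hi
    by_contra hdi
    have h1 : v 0 < v i := hsm (Fin.pos_iff_ne_zero.mpr hi)
    have h2 : d i * v i ≤ ∑ j, d j * v j := Finset.single_le_sum (f := fun j => d j * v j) (fun j _ => Nat.zero_le _) (Finset.mem_univ i)
    have h3 : v i ≤ d i * v i := Nat.le_mul_of_pos_left _ (by omega)
    omega
  have hsum : ∑ i, d i * v i = d 0 * v 0 := by
    rw [Finset.sum_eq_single 0]
    · intro i _ hi; rw [hz i hi, zero_mul]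
    · intro h; exact absurd (Finset.mem_univ 0) h
  have hd0 : d 0 = 1 := by
    have := hsum ▸ hd
    have hv0 := hv1 0
    nlinarith [this]
  funext i
  by_cases hi : i = 0
  · subst hi; simp [hd0]
  · rw [hz i hi, Pi.single_eq_of_ne hi]
noncomputable section
open PowerSeries Cardinal

lemma auxTail (Γ : AddSubmonoid ℕ) (c : ℕ) (hc1 : ∀ n, c ≤ n → n ∈ Γ)
    (R : Subalgebra ℂ (PowerSeries ℂ)) (hcl : IsClosedSubalg R)
    (hsgp : sgp (R : Set (PowerSeries ℂ)) = (Γ : Set ℕ)) (h : PowerSeries ℂ) :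
    (PowerSeries.X : PowerSeries ℂ) ^ c * h ∈ R := by
  set f : PowerSeries ℂ := PowerSeries.X ^ c * h with hf
  have hflow : ∀ m < c, PowerSeries.coeff m f = 0 :=
    PowerSeries.X_pow_dvd_iff.mp (dvd_mul_right _ h)
  have key : ∀ N : ℕ, ∃ g, g ∈ R ∧ (∀ m < N, PowerSeries.coeff m (f - g) = 0) ∧
      (∀ m < c, PowerSeries.coeff m g = 0) := by
    intro N
    induction N with
    | zero => exact ⟨0, R.zero_mem, by simp, by simp⟩
    | succ N ih =>
        obtain ⟨g, hgR, hg1, hg2⟩ := ih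
        by_cases hN : N < c
        · refine ⟨g, hgR, ?_, hg2⟩
          intro m hm
          rcases Nat.lt_succ_iff_lt_or_eq.mp hm with hm' | rfl
          · exact hg1 m hm'
          · rw [map_sub, hflow m hN, hg2 m hN, sub_zero]
        · push_neg at hN
          have hNΓ : N ∈ sgp (R : Set (PowerSeries ℂ)) := by
            rw [hsgp]; exact hc1 N hN
          obtain ⟨u, huR, hu⟩ := hNΓ
          set α := PowerSeries.coeff N u with hα
          set z := PowerSeries.coeff N (f - g) with hz
          refine ⟨g + (z / α) • u, R.add_mem hgR (R.smul_mem huR _), ?_, ?_⟩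
          · intro m hm
            have : PowerSeries.coeff m (f - (g + (z / α) • u)) =
                PowerSeries.coeff m (f - g) - (z / α) * PowerSeries.coeff m u := by
              rw [sub_add_eq_sub_sub, map_sub, map_smul, smul_eq_mul]
            rw [this]
            rcases Nat.lt_succ_iff_lt_or_eq.mp hm with hm' | rfl
            · rw [hg1 m hm', hu.2 m hm', mul_zero, sub_zero]
            · rw [← hz, ← hα, div_mul_cancel₀ _ hu.1, sub_self]
          · intro m hm
            rw [map_add, hg2 m hm, map_smul, smul_eq_mul, hu.2 m (lt_of_lt_of_le hm hN),
              mul_zero, add_zero]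
  apply hcl
  intro N
  obtain ⟨g, hgR, hg1, _⟩ := key N
  exact ⟨g, hgR, hg1⟩

lemma auxSubmodCard (c : ℕ) :
    #(Submodule ℂ (Fin c → ℂ)) ≤ Cardinal.continuum := by
  have hsurj : Function.Surjective
      (fun f : ℕ → (Fin c → ℂ) => Submodule.span ℂ (Set.range f)) := by
    intro p
    set k := Module.finrank ℂ p with hk
    set bb := Module.finBasis ℂ p with hbb
    refine ⟨fun n => if h : n < k then (bb ⟨n, h⟩ : Fin c → ℂ) else 0, ?_⟩
    apply le_antisymm
    · rw [Submodule.span_le]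
      rintro _ ⟨n, rfl⟩
      by_cases h : n < k
      · simp only [dif_pos h]; exact (bb ⟨n, h⟩).2
      · simp only [dif_neg h]; exact p.zero_mem
    · conv_lhs => rw [← Submodule.map_subtype_top p, ← bb.span_eq, Submodule.map_span]
      apply Submodule.span_mono
      rintro _ ⟨_, ⟨i, rfl⟩, rfl⟩
      exact ⟨i.val, by simp [Nat.not_le.mpr (show (i:ℕ) < k from i.isLt)]⟩
  have h1 : #(Fin c → ℂ) ≤ 𝔠 := by
    rw [← Cardinal.power_def, Cardinal.mk_fin, mk_complex]
    rcases Nat.eq_zero_or_pos c with rfl | hcpos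
    · simpa using one_le_aleph0.trans aleph0_le_continuum
    · exact (Cardinal.power_nat_eq aleph0_le_continuum hcpos).le
  calc #(Submodule ℂ (Fin c → ℂ)) ≤ #(ℕ → (Fin c → ℂ)) := Cardinal.mk_le_of_surjective hsurj
    _ = #(Fin c → ℂ) ^ (ℵ₀ : Cardinal) := by rw [← Cardinal.mk_denumerable ℕ, ← Cardinal.power_def]
    _ ≤ 𝔠 ^ (ℵ₀ : Cardinal) := Cardinal.power_le_power_right h1
    _ = 𝔠 := by rw [← Cardinal.two_power_aleph0, ← Cardinal.power_mul, Cardinal.aleph0_mul_aleph0]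

lemma auxUpper (Γ : AddSubmonoid ℕ) (c : ℕ) (hc1 : ∀ n, c ≤ n → n ∈ Γ) :
    #{R : Subalgebra ℂ (PowerSeries ℂ) //
        IsClosedSubalg R ∧ sgp (R : Set (PowerSeries ℂ)) = (Γ : Set ℕ)} ≤ 𝔠 := by
  set T : PowerSeries ℂ →ₗ[ℂ] (Fin c → ℂ) :=
    LinearMap.pi (fun i : Fin c => (PowerSeries.coeff i : PowerSeries ℂ →ₗ[ℂ] ℂ)) with hT
  set Φ : {R : Subalgebra ℂ (PowerSeries ℂ) //
      IsClosedSubalg R ∧ sgp (R : Set (PowerSeries ℂ)) = (Γ : Set ℕ)} →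
      Submodule ℂ (Fin c → ℂ) :=
    fun R => (Subalgebra.toSubmodule R.1).map T with hΦ
  have hkey : ∀ R S, Φ R = Φ S → R.1 ≤ S.1 := by
    intro R S hRS f hfR
    have hTf : T f ∈ Φ S := by
      rw [← hRS]; exact ⟨f, hfR, rfl⟩
    obtain ⟨g, hgS, hTg⟩ := hTf
    have hco : ∀ m < c, PowerSeries.coeff m (f - g) = 0 := by
      intro m hm
      have := congrFun hTg ⟨m, hm⟩
      simp only [hT, LinearMap.pi_apply] at this
      rw [map_sub, this, sub_self]
    obtain ⟨h, hh⟩ := PowerSeries.X_pow_dvd_iff.mpr hco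
    have : f = g + PowerSeries.X ^ c * h := by rw [← hh]; ring
    rw [this]
    exact S.1.add_mem hgS (auxTail Γ c hc1 S.1 S.2.1 S.2.2 h)
  have hinj : Function.Injective Φ := by
    intro R S hRS
    exact Subtype.ext (le_antisymm (hkey R S hRS) (hkey S R hRS.symm))
  exact (Cardinal.mk_le_of_injective hinj).trans (auxSubmodCard c)
noncomputable section
open PowerSeries

/-- The perturbed generators. -/
def auxX {k : ℕ} (v : Fin (k+1) → ℕ) (F : ℕ) (l : ℂ) : Fin (k+1) → PowerSeries ℂ :=
  fun i => if i = 0 then PowerSeries.X ^ (v 0) + PowerSeries.C l * PowerSeries.X ^ F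
    else PowerSeries.X ^ (v i)

lemma auxCoeffCXpow (a : ℂ) (e s : ℕ) :
    PowerSeries.coeff s (PowerSeries.C a * PowerSeries.X ^ e) = if s = e then a else 0 := by
  rw [PowerSeries.coeff_C_mul, PowerSeries.coeff_X_pow]
  split <;> simp

theorem auxCoeffProd {k : ℕ} (v : Fin (k+1) → ℕ) (hv1 : ∀ i, 1 ≤ v i)
    (F : ℕ) (hF0 : v 0 < F) (l : ℂ) (d : Fin (k+1) → ℕ) (s : ℕ) (hs : s ≤ F) :
    PowerSeries.coeff s (∏ i, (auxX v F l i) ^ (d i)) =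
      (if ∑ i, d i * v i = s then 1 else 0) +
      (if s = F ∧ d = Pi.single 0 1 then l else 0) := by
  classical
  set W : ℕ := ∑ i ∈ Finset.univ.erase 0, d i * v i with hW
  have hprod : ∏ i, (auxX v F l i) ^ (d i) =
      (PowerSeries.C l * PowerSeries.X ^ F + PowerSeries.X ^ (v 0)) ^ (d 0) *
        PowerSeries.X ^ W := by
    rw [← Finset.mul_prod_erase Finset.univ _ (Finset.mem_univ 0)]
    congr 1
    · simp [auxX, add_comm]
    · rw [hW, ← Finset.prod_pow_eq_pow_sum]
      apply Finset.prod_congr rfl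
      intro i hi
      have hi0 : i ≠ 0 := Finset.ne_of_mem_erase hi
      rw [auxX, if_neg hi0, ← pow_mul, mul_comm (v i) (d i)]
  rw [hprod, add_pow, Finset.sum_mul, map_sum]
  have hterm : ∀ r, (PowerSeries.C l * PowerSeries.X ^ F) ^ r *
        (PowerSeries.X ^ (v 0)) ^ (d 0 - r) * (Nat.choose (d 0) r : PowerSeries ℂ) *
        PowerSeries.X ^ W =
      PowerSeries.C ((Nat.choose (d 0) r : ℂ) * l ^ r) *
        PowerSeries.X ^ (F * r + v 0 * (d 0 - r) + W) := by
    intro r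
    rw [← map_natCast (PowerSeries.C : ℂ →+* PowerSeries ℂ) (Nat.choose (d 0) r), map_mul, map_pow]
    ring
  have hsummand : ∀ r, PowerSeries.coeff s
        ((PowerSeries.C l * PowerSeries.X ^ F) ^ r *
          (PowerSeries.X ^ (v 0)) ^ (d 0 - r) * (Nat.choose (d 0) r : PowerSeries ℂ) *
          PowerSeries.X ^ W) =
      if s = F * r + v 0 * (d 0 - r) + W then (Nat.choose (d 0) r : ℂ) * l ^ r else 0 := by
    intro r
    rw [hterm r, auxCoeffCXpow]
  rw [Finset.sum_congr rfl (fun r _ => hsummand r), Finset.sum_range_succ']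
  have hW0 : v 0 * d 0 + W = ∑ i, d i * v i := by
    rw [hW, mul_comm]
    exact Finset.add_sum_erase _ (fun i => d i * v i) (Finset.mem_univ (0 : Fin (k+1)))
  have hfirst : (if s = F * 0 + v 0 * (d 0 - 0) + W then ((Nat.choose (d 0) 0 : ℂ)) * l ^ 0 else 0)
      = if ∑ i, d i * v i = s then 1 else 0 := by
    rw [Nat.mul_zero, Nat.zero_add, Nat.sub_zero, Nat.choose_zero_right]
    simp only [Nat.cast_one, pow_zero, mul_one]
    exact if_congr (by rw [hW0, eq_comm]) rfl rfl
  rw [hfirst, add_comm]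
  congr 1
  by_cases hcase : s = F ∧ d = Pi.single 0 1
  · obtain ⟨hsF, hd⟩ := hcase
    subst hd
    have hd0 : (Pi.single (0 : Fin (k+1)) (1:ℕ) : Fin (k+1) → ℕ) 0 = 1 := by simp
    have hWz : W = 0 := by
      rw [hW]
      exact Finset.sum_eq_zero (fun i hi => by
        rw [Pi.single_eq_of_ne (Finset.ne_of_mem_erase hi), zero_mul])
    rw [if_pos ⟨hsF, rfl⟩, hd0, Finset.sum_range_one, hWz, hsF]
    norm_num
  · rw [if_neg hcase]
    apply Finset.sum_eq_zero
    intro r hr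
    have hrd : r < d 0 := Finset.mem_range.mp hr
    rw [if_neg]
    intro hcontra
    have hFpos : 1 ≤ F := le_trans (hv1 0) (le_of_lt hF0)
    have hA : F ≤ F * (r + 1) := Nat.le_mul_of_pos_right F (by omega)
    have h1 : F * (r + 1) = F ∧ v 0 * (d 0 - (r + 1)) = 0 ∧ W = 0 ∧ s = F := by omega
    have hr0 : r = 0 := by
      have := h1.1
      have : r + 1 = 1 := Nat.eq_of_mul_eq_mul_left (by omega) (by omega : F * (r+1) = F * 1)
      omega
    subst hr0
    have hd01 : d 0 = 1 := by
      rcases Nat.mul_eq_zero.mp h1.2.1 with h | h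
      · exact absurd h (by have := hv1 0; omega)
      · omega
    have hdsingle : d = Pi.single 0 1 := by
      funext i
      by_cases hi : i = 0
      · subst hi; rw [hd01, Pi.single_eq_same]
      · rw [Pi.single_eq_of_ne hi]
        have hWz := h1.2.2.1
        rw [hW] at hWz
        have := (Finset.sum_eq_zero_iff).mp hWz i (Finset.mem_erase.mpr ⟨hi, Finset.mem_univ i⟩)
        have hvi := hv1 i
        exact by nlinarith [this]
    exact hcase ⟨h1.2.2.2, hdsingle⟩
theorem auxCoeffAeval {k : ℕ} (v : Fin (k+1) → ℕ) (hv1 : ∀ i, 1 ≤ v i)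
    (F : ℕ) (hF0 : v 0 < F) (l : ℂ) (p : MvPolynomial (Fin (k+1)) ℂ) (s : ℕ) (hs : s ≤ F) :
    PowerSeries.coeff s (MvPolynomial.aeval (auxX v F l) p) =
      (∑ d ∈ p.support.filter (fun d => ∑ i, d i * v i = s), MvPolynomial.coeff d p)
      + (if s = F then l * MvPolynomial.coeff (Finsupp.single 0 1) p else 0) := by
  classical
  rw [MvPolynomial.aeval_def, MvPolynomial.eval₂_eq, map_sum]
  have hterm : ∀ d ∈ p.support, PowerSeries.coeff s
        (algebraMap ℂ (PowerSeries ℂ) (MvPolynomial.coeff d p) *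
          ∏ i ∈ d.support, (auxX v F l i) ^ d i) =
      MvPolynomial.coeff d p * ((if ∑ i, d i * v i = s then 1 else 0) +
        (if s = F ∧ ⇑d = Pi.single 0 1 then l else 0)) := by
    intro d _
    have hprod : ∏ i ∈ d.support, (auxX v F l i) ^ d i = ∏ i, (auxX v F l i) ^ d i := by
      apply Finset.prod_subset (Finset.subset_univ _)
      intro i _ hi
      rw [Finsupp.notMem_support_iff.mp hi, pow_zero]
    rw [hprod, show (algebraMap ℂ (PowerSeries ℂ)) = (PowerSeries.C : ℂ →+* PowerSeries ℂ) from rfl,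
      PowerSeries.coeff_C_mul, auxCoeffProd v hv1 F hF0 l (⇑d) s hs]
  rw [Finset.sum_congr rfl hterm]
  simp only [mul_add]
  rw [Finset.sum_add_distrib]
  congr 1
  · rw [Finset.sum_filter]
    apply Finset.sum_congr rfl
    intro d _
    split <;> simp
  · by_cases hsF : s = F
    · subst hsF
      rw [if_pos rfl]
      have hcond : ∀ d : Fin (k+1) →₀ ℕ, (s = s ∧ ⇑d = Pi.single 0 1) ↔ d = Finsupp.single 0 1 := by
        intro d
        constructor
        · rintro ⟨-, h⟩
          apply DFunLike.coe_injective
          show ⇑d = ⇑(Finsupp.single 0 1)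
          rw [h, Finsupp.single_eq_pi_single]
        · rintro rfl
          exact ⟨rfl, Finsupp.single_eq_pi_single 0 1⟩
      calc ∑ d ∈ p.support, MvPolynomial.coeff d p * (if s = s ∧ ⇑d = Pi.single 0 1 then l else 0)
          = ∑ d ∈ p.support, (if d = Finsupp.single 0 1 then MvPolynomial.coeff d p * l else 0) := by
            apply Finset.sum_congr rfl
            intro d _
            rw [if_congr (hcond d) rfl rfl]
            split <;> simp
        _ = if Finsupp.single 0 1 ∈ p.support then
              MvPolynomial.coeff (Finsupp.single 0 1) p * l else 0 := Finset.sum_ite_eq' _ _ _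
        _ = l * MvPolynomial.coeff (Finsupp.single 0 1) p := by
            split
            · ring
            · rename_i hns
              rw [MvPolynomial.notMem_support_iff.mp hns, mul_zero]
    · rw [if_neg hsF]
      apply Finset.sum_eq_zero
      intro d _
      rw [if_neg (fun hc => hsF hc.1), mul_zero]
def auxR {k : ℕ} (v : Fin (k+1) → ℕ) (F : ℕ) (l : ℂ) (c : ℕ) :
    Subalgebra ℂ (PowerSeries ℂ) where
  carrier := adjSet (auxX v F l) c
  zero_mem' := ⟨0, 0, by simp⟩
  one_mem' := ⟨1, 0, by simp⟩
  add_mem' := by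
    rintro f1 f2 ⟨p, h, rfl⟩ ⟨q, j, rfl⟩
    exact ⟨p + q, h + j, by rw [map_add]; ring⟩
  mul_mem' := by
    rintro f1 f2 ⟨p, h, rfl⟩ ⟨q, j, rfl⟩
    refine ⟨p * q, (MvPolynomial.aeval (auxX v F l) p) * j +
      h * (MvPolynomial.aeval (auxX v F l) q) + PowerSeries.X ^ c * h * j, by rw [map_mul]; ring⟩
  algebraMap_mem' := fun r => ⟨MvPolynomial.C r, 0, by simp⟩

lemma auxR_mem {k : ℕ} (v : Fin (k+1) → ℕ) (F : ℕ) (l : ℂ) (c : ℕ) (f : PowerSeries ℂ) :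
    f ∈ auxR v F l c ↔ f ∈ adjSet (auxX v F l) c := Iff.rfl

lemma auxRClosed {k : ℕ} (v : Fin (k+1) → ℕ) (F : ℕ) (l : ℂ) (c : ℕ) :
    IsClosedSubalg (auxR v F l c) := by
  intro f hf
  obtain ⟨gg, hgg, hco⟩ := hf c
  obtain ⟨p, h, rfl⟩ := hgg
  obtain ⟨j, hj⟩ := PowerSeries.X_pow_dvd_iff.mpr hco
  exact ⟨p, h + j, by rw [mul_add, ← hj]; ring⟩

theorem auxSgp {k : ℕ} (Γ : AddSubmonoid ℕ) (v : Fin (k+1) → ℕ) (hsm : StrictMono v)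
    (hclos : AddSubmonoid.closure (Set.range v) = Γ) (hv1 : ∀ i, 1 ≤ v i)
    (c : ℕ) (hc1 : ∀ n, c ≤ n → n ∈ Γ) (F : ℕ) (hF : F ∉ Γ) (hcF : c = F + 1)
    (hF0 : v 0 < F) (l : ℂ) :
    sgp (adjSet (auxX v F l) c) = (Γ : Set ℕ) := by
  classical
  ext n
  simp only [Set.mem_setOf_eq, SetLike.mem_coe]
  constructor
  · rintro ⟨f, ⟨p, h, rfl⟩, hford⟩
    by_cases hcn : c ≤ n
    · exact hc1 n hcn
    push_neg at hcn
    have hnF : n ≤ F := by omega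
    have hch : ∀ m < c, PowerSeries.coeff m (PowerSeries.X ^ c * h) = 0 :=
      PowerSeries.X_pow_dvd_iff.mp (dvd_mul_right _ _)
    have hfn : PowerSeries.coeff n (MvPolynomial.aeval (auxX v F l) p) ≠ 0 := by
      have := hford.1
      rwa [map_add, hch n hcn, add_zero] at this
    by_contra hnΓ
    rw [auxCoeffAeval v hv1 F hF0 l p n hnF] at hfn
    have hfilter : p.support.filter (fun d => ∑ i, d i * v i = n) = ∅ := by
      rw [Finset.filter_eq_empty_iff]
      intro d _ hd
      exact hnΓ (hd ▸ auxWeightMem Γ v hclos ⇑d)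
    rw [hfilter, Finset.sum_empty, zero_add] at hfn
    by_cases hnFeq : n = F
    · rw [if_pos hnFeq] at hfn
      -- now show the coefficient of `e0` in `p` is zero
      have hvord : PowerSeries.coeff (v 0) (MvPolynomial.aeval (auxX v F l) p +
          PowerSeries.X ^ c * h) = 0 := hford.2 (v 0) (by omega)
      rw [map_add, hch (v 0) (by omega), add_zero,
        auxCoeffAeval v hv1 F hF0 l p (v 0) (le_of_lt hF0), if_neg (by omega)] at hvord
      have hfe : p.support.filter (fun d => ∑ i, d i * v i = v 0) =
          p.support.filter (fun d => d = Finsupp.single 0 1) := by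
        apply Finset.filter_congr
        intro d _
        constructor
        · intro hd
          apply DFunLike.coe_injective
          show ⇑d = ⇑(Finsupp.single 0 1)
          rw [Finsupp.single_eq_pi_single]
          exact auxUniqueRep v hsm hv1 (⇑d) hd
        · rintro rfl
          simp [Finsupp.single_apply, Finset.sum_ite_eq]
      rw [hfe] at hvord
      rw [Finset.sum_filter, Finset.sum_ite_eq' p.support (Finsupp.single 0 1)
        (fun d => MvPolynomial.coeff d p), add_zero] at hvord
      by_cases he : Finsupp.single 0 1 ∈ p.support
      · rw [if_pos he] at hvord
        rw [hvord] at hfn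
        simp at hfn
      · rw [MvPolynomial.notMem_support_iff.mp he] at hfn
        simp at hfn
    · rw [if_neg hnFeq] at hfn
      exact hfn rfl
  · intro hnΓ
    by_cases hcn : c ≤ n
    · refine ⟨PowerSeries.X ^ c * PowerSeries.X ^ (n - c), ⟨0, PowerSeries.X ^ (n - c), by
        simp⟩, ?_⟩
      rw [← pow_add, Nat.add_sub_cancel' hcn]
      constructor
      · rw [PowerSeries.coeff_X_pow, if_pos rfl]; exact one_ne_zero
      · intro m hm; rw [PowerSeries.coeff_X_pow, if_neg (Nat.ne_of_lt hm)]
    · push_neg at hcn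
      have hnF : n ≤ F := by omega
      have hnne : n ≠ F := fun h => hF (h ▸ hnΓ)
      obtain ⟨dv, hdv⟩ := auxRep Γ v hclos hnΓ
      set d0 : Fin (k+1) →₀ ℕ := Finsupp.equivFunOnFinite.symm dv with hd0
      have hd0c : ⇑d0 = dv := Equiv.apply_symm_apply Finsupp.equivFunOnFinite dv
      set p : MvPolynomial (Fin (k+1)) ℂ := MvPolynomial.monomial d0 1 with hp
      have hsupp : p.support = {d0} := by
        rw [hp, MvPolynomial.support_monomial, if_neg one_ne_zero]
      refine ⟨MvPolynomial.aeval (auxX v F l) p, ⟨p, 0, by simp⟩, ?_, ?_⟩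
      · rw [auxCoeffAeval v hv1 F hF0 l p n hnF, if_neg hnne, add_zero, hsupp]
        have : ({d0} : Finset (Fin (k+1) →₀ ℕ)).filter (fun d => ∑ i, d i * v i = n) = {d0} := by
          rw [Finset.filter_eq_self]
          intro d hd
          rw [Finset.mem_singleton.mp hd]
          simp only [hd0c]
          exact hdv
        rw [this, Finset.sum_singleton, hp, MvPolynomial.coeff_monomial, if_pos rfl]
        exact one_ne_zero
      · intro m hm
        have hmF : m ≤ F := by omega
        rw [auxCoeffAeval v hv1 F hF0 l p m hmF, if_neg (by omega), add_zero, hsupp]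
        have : ({d0} : Finset (Fin (k+1) →₀ ℕ)).filter (fun d => ∑ i, d i * v i = m) = ∅ := by
          rw [Finset.filter_eq_empty_iff]
          intro d hd
          rw [Finset.mem_singleton.mp hd]
          simp only [hd0c, hdv]
          omega
        rw [this, Finset.sum_empty]
lemma auxRcoe {k : ℕ} (v : Fin (k+1) → ℕ) (F : ℕ) (l : ℂ) (c : ℕ) :
    ((auxR v F l c : Subalgebra ℂ (PowerSeries ℂ)) : Set (PowerSeries ℂ)) =
      adjSet (auxX v F l) c := rfl

/-- if there is exactly one two-element set `{a, b}` of exponent vectors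
with equal weighted value `d < c`, then the set of closed `ℂ`-subalgebras of `ℂ[[t]]`
with semigroup `Γ` is in bijection with `ℂ^N`, where
`N = M − #{gaps of Γ greater than d}` and `M = Σᵢ #{gaps of Γ greater than v i}`. -/
theorem stmt10 (g : ℕ) (Γ : AddSubmonoid ℕ) (hfin : ((Γ : Set ℕ))ᶜ.Finite)
    (v : Fin (g + 1) → ℕ) (hmin : MinGen Γ v) (c : ℕ) (hc : IsConductor Γ c)
    (a b : Fin (g + 1) → ℕ) (hab : a ≠ b)
    (heq : ∑ i, a i * v i = ∑ i, b i * v i) (hlt : ∑ i, a i * v i < c)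
    (huniq : ∀ a' b' : Fin (g + 1) → ℕ, a' ≠ b' →
      (∑ i, a' i * v i) = (∑ i, b' i * v i) → (∑ i, a' i * v i) < c →
      ({a', b'} : Set (Fin (g + 1) → ℕ)) = {a, b}) :
    Nonempty ({R : Subalgebra ℂ (PowerSeries ℂ) //
        IsClosedSubalg R ∧ sgp (R : Set (PowerSeries ℂ)) = (Γ : Set ℕ)} ≃
      (Fin ((∑ i, (hfin.toFinset.filter fun δ => v i < δ).card) -
          (hfin.toFinset.filter fun δ => (∑ i, a i * v i) < δ).card) → ℂ)) := by
  classical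
  obtain ⟨hsm, hclos, hminimal⟩ := hmin
  have hv1 : ∀ i, 1 ≤ v i := auxVPos Γ v hsm hclos hminimal
  set dd : ℕ := ∑ i, a i * v i with hdd
  -- a has a nonzero entry
  have hane : ∃ i, a i ≠ 0 := by
    by_contra hcon
    push_neg at hcon
    apply hab
    have hb0 : ∀ i, b i = 0 := by
      intro i
      have hz : ∑ i, b i * v i = 0 := by
        rw [← heq]
        exact Finset.sum_eq_zero (fun j _ => by rw [hcon j, zero_mul])
      have := (Finset.sum_eq_zero_iff).mp hz i (Finset.mem_univ i)
      have := hv1 i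
      nlinarith
    funext i; rw [hcon i, hb0 i]
  have hv0dd : v 0 ≤ dd := by
    obtain ⟨i, hi⟩ := hane
    have h1 : v 0 ≤ v i := hsm.monotone (Fin.zero_le i)
    have h2 : v i ≤ a i * v i := Nat.le_mul_of_pos_left _ (by omega)
    have h3 : a i * v i ≤ dd :=
      Finset.single_le_sum (f := fun j => a j * v j) (fun j _ => Nat.zero_le _) (Finset.mem_univ i)
    omega
  have hv0Γ : v 0 ∈ Γ := by
    rw [← hclos]; exact AddSubmonoid.subset_closure (Set.mem_range_self 0)
  -- there is a gap above v 0
  have hgap : ∃ δ, δ ∉ Γ ∧ v 0 < δ := by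
    by_contra hcon
    push_neg at hcon
    have hall : ∀ n, v 0 ≤ n → n ∈ Γ := by
      intro n hn
      by_contra hnΓ
      have := hcon n hnΓ
      rcases Nat.lt_or_ge (v 0) n with h | h
      · omega
      · have : n = v 0 := by omega
        exact hnΓ (this ▸ hv0Γ)
    have hcle : ¬ (v 0 < c) := by
      intro h
      obtain ⟨n, hn1, hn2⟩ := hc.2 (v 0) h
      exact hn2 (hall n hn1)
    omega
  obtain ⟨δ, hδ1, hδ2⟩ := hgap
  have hne : hfin.toFinset.Nonempty := ⟨δ, hfin.mem_toFinset.mpr hδ1⟩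
  set F : ℕ := hfin.toFinset.max' hne with hF
  have hFgap : F ∉ Γ := by
    have := hfin.toFinset.max'_mem hne
    rwa [hfin.mem_toFinset] at this
  have hFmax : ∀ n, n ∉ Γ → n ≤ F := fun n hn =>
    Finset.le_max' _ n (hfin.mem_toFinset.mpr hn)
  have hF0 : v 0 < F := lt_of_lt_of_le hδ2 (hFmax δ hδ1)
  have hFc : F < c := by
    by_contra hcon
    exact hFgap (hc.1 F (by omega))
  have hcF : c = F + 1 := by
    rcases Nat.lt_or_ge (F + 1) c with h | h
    · obtain ⟨n, hn1, hn2⟩ := hc.2 (F + 1) h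
      have := hFmax n hn2
      omega
    · omega
  -- N ≥ 1
  have hNpos : (hfin.toFinset.filter fun x => dd < x).card <
      ∑ i, (hfin.toFinset.filter fun x => v i < x).card := by
    have hCd0 : (hfin.toFinset.filter fun x => dd < x).card ≤
        (hfin.toFinset.filter fun x => v 0 < x).card := by
      apply Finset.card_le_card
      intro x hx
      rw [Finset.mem_filter] at hx ⊢
      exact ⟨hx.1, by omega⟩
    by_cases hg : g = 0
    · exfalso
      subst hg
      have hsum1 : ∀ dvec : Fin 1 → ℕ, ∑ i, dvec i * v i = dvec 0 * v 0 := fun dvec =>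
        Fin.sum_univ_one _
      obtain ⟨d1, hd1⟩ := auxRep Γ v hclos (hc.1 c le_rfl)
      obtain ⟨d2, hd2⟩ := auxRep Γ v hclos (hc.1 (c+1) (by omega))
      rw [hsum1] at hd1 hd2
      have hdvd1 : v 0 ∣ c := ⟨d1 0, by rw [← hd1, Nat.mul_comm]⟩
      have hdvd2 : v 0 ∣ c + 1 := ⟨d2 0, by rw [← hd2, Nat.mul_comm]⟩
      have hv01 : v 0 = 1 := by
        have := Nat.dvd_sub hdvd2 hdvd1
        simpa using this
      apply hab
      have ha' : dd = a 0 * v 0 := by rw [hdd]; exact hsum1 a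
      have hb' : ∑ i, b i * v i = b 0 * v 0 := hsum1 b
      rw [hv01, mul_one] at ha' hb'
      funext i
      have hab0 : a 0 = b 0 := by omega
      rw [Fin.eq_zero i]; exact hab0
    · by_contra hcon
      push_neg at hcon
      have h01 : (0 : Fin (g+1)) ≠ (1 : Fin (g+1)) := by
        have hval : ((1 : Fin (g+1)) : ℕ) = 1 := by
          rw [Fin.val_one']
          exact Nat.mod_eq_of_lt (by omega)
        intro h
        have := congrArg Fin.val h
        rw [hval] at this
        simp at this
      have hsum : (hfin.toFinset.filter fun x => v 0 < x).card +
          (hfin.toFinset.filter fun x => v 1 < x).card ≤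
          ∑ i, (hfin.toFinset.filter fun x => v i < x).card := by
        have := Finset.sum_le_sum_of_subset
          (Finset.subset_univ ({0, 1} : Finset (Fin (g+1))))
          (f := fun i => (hfin.toFinset.filter fun x => v i < x).card)
        rwa [Finset.sum_pair h01] at this
      have hC1 : (hfin.toFinset.filter fun x => v 1 < x).card = 0 := by omega
      have hgap1 : ∀ n, n ∉ Γ → n ≤ v 1 := by
        intro n hn
        by_contra hcon2
        have hmem : n ∈ hfin.toFinset.filter fun x => v 1 < x :=
          Finset.mem_filter.mpr ⟨hfin.mem_toFinset.mpr hn, by omega⟩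
        rw [Finset.card_eq_zero.mp hC1] at hmem
        exact absurd hmem (Finset.notMem_empty n)
      have hv1Γ : v 1 ∈ Γ := by
        rw [← hclos]; exact AddSubmonoid.subset_closure (Set.mem_range_self 1)
      have hallv1 : ∀ n, v 1 ≤ n → n ∈ Γ := by
        intro n hn
        by_contra hnΓ
        have := hgap1 n hnΓ
        have : n = v 1 := by omega
        exact hnΓ (this ▸ hv1Γ)
      have hcv1 : c ≤ v 1 := by
        by_contra hcon2
        obtain ⟨n, hn1, hn2⟩ := hc.2 (v 1) (by omega)
        exact hn2 (hallv1 n hn1)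
      have hex : ∃ i, i ≠ 0 ∧ (a i ≠ 0 ∨ b i ≠ 0) := by
        by_contra hcon2
        push_neg at hcon2
        apply hab
        have hsa : ∑ i, a i * v i = a 0 * v 0 := by
          apply Finset.sum_eq_single 0
          · intro i _ hi; rw [(hcon2 i hi).1, zero_mul]
          · intro h; exact absurd (Finset.mem_univ 0) h
        have hsb : ∑ i, b i * v i = b 0 * v 0 := by
          apply Finset.sum_eq_single 0
          · intro i _ hi; rw [(hcon2 i hi).2, zero_mul]
          · intro h; exact absurd (Finset.mem_univ 0) h
        have hv0 := hv1 0
        have hab0 : a 0 = b 0 := by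
          apply Nat.eq_of_mul_eq_mul_right (show 0 < v 0 by omega)
          rw [← hsa, ← hsb, ← hdd]
          exact heq
        funext i
        by_cases hi : i = 0
        · subst hi; exact hab0
        · rw [(hcon2 i hi).1, (hcon2 i hi).2]
      obtain ⟨i, hi0, hi⟩ := hex
      have h1i : v 1 ≤ v i := by
        apply hsm.monotone
        rw [Fin.le_def]
        have hval : ((1 : Fin (g+1)) : ℕ) = 1 := by
          rw [Fin.val_one']; exact Nat.mod_eq_of_lt (by omega)
        rw [hval]
        have : (i : ℕ) ≠ 0 := fun h => hi0 (Fin.ext h)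
        omega
      have hddge : v i ≤ dd := by
        rcases hi with hi | hi
        · have h2 : v i ≤ a i * v i := Nat.le_mul_of_pos_left _ (by omega)
          have h3 : a i * v i ≤ dd := Finset.single_le_sum (f := fun j => a j * v j)
            (fun j _ => Nat.zero_le _) (Finset.mem_univ i)
          omega
        · have h2 : v i ≤ b i * v i := Nat.le_mul_of_pos_left _ (by omega)
          have h3 : b i * v i ≤ ∑ j, b j * v j := Finset.single_le_sum
            (f := fun j => b j * v j) (fun j _ => Nat.zero_le _) (Finset.mem_univ i)
          rw [← heq] at h3
          omega
      omega
  -- the moduli set has cardinality continuum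
  set Mod := {R : Subalgebra ℂ (PowerSeries ℂ) //
      IsClosedSubalg R ∧ sgp (R : Set (PowerSeries ℂ)) = (Γ : Set ℕ)} with hMod
  have hup : Cardinal.mk Mod ≤ Cardinal.continuum := auxUpper Γ c hc.1
  have hlow : Cardinal.continuum ≤ Cardinal.mk Mod := by
    rw [← mk_complex]
    have hsgpl : ∀ l : ℂ, sgp ((auxR v F l c : Subalgebra ℂ (PowerSeries ℂ)) :
        Set (PowerSeries ℂ)) = (Γ : Set ℕ) := by
      intro l
      rw [auxRcoe]
      exact auxSgp Γ v hsm hclos hv1 c hc.1 F hFgap hcF hF0 l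
    set Ψ : ℂ → Mod := fun l => ⟨auxR v F l c, auxRClosed v F l c, hsgpl l⟩ with hΨ
    apply Cardinal.mk_le_of_injective (f := Ψ)
    intro l m hlm'
    by_contra hlm
    have hReq : auxR v F l c = auxR v F m c := congrArg Subtype.val hlm'
    have h1 : (PowerSeries.X ^ (v 0) + PowerSeries.C l * PowerSeries.X ^ F)
        ∈ adjSet (auxX v F l) c :=
      ⟨MvPolynomial.X 0, 0, by simp [auxX]⟩
    have h2 : (PowerSeries.X ^ (v 0) + PowerSeries.C m * PowerSeries.X ^ F)
        ∈ adjSet (auxX v F l) c := by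
      have : (PowerSeries.X ^ (v 0) + PowerSeries.C m * PowerSeries.X ^ F)
          ∈ adjSet (auxX v F m) c := ⟨MvPolynomial.X 0, 0, by simp [auxX]⟩
      rw [← auxR_mem] at this ⊢
      rw [hReq]
      exact this
    have h3 : (PowerSeries.C (l - m) * PowerSeries.X ^ F) ∈ adjSet (auxX v F l) c := by
      have hdiff : PowerSeries.C (l - m) * PowerSeries.X ^ F =
          (PowerSeries.X ^ (v 0) + PowerSeries.C l * PowerSeries.X ^ F) -
          (PowerSeries.X ^ (v 0) + PowerSeries.C m * PowerSeries.X ^ F) := by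
        rw [map_sub]; ring
      rw [← auxR_mem] at h1 h2 ⊢
      rw [hdiff]
      exact sub_mem h1 h2
    have hFsgp : F ∈ sgp (adjSet (auxX v F l) c) := by
      refine ⟨PowerSeries.C (l - m) * PowerSeries.X ^ F, h3, ?_, ?_⟩
      · rw [auxCoeffCXpow, if_pos rfl]
        exact sub_ne_zero_of_ne hlm
      · intro m' hm'
        rw [auxCoeffCXpow, if_neg (Nat.ne_of_lt hm')]
    rw [auxSgp Γ v hsm hclos hv1 c hc.1 F hFgap hcF hF0 l] at hFsgp
    exact hFgap hFsgp
  have hcard1 : Cardinal.mk Mod = Cardinal.continuum := le_antisymm hup hlow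
  have hN1 : 1 ≤ (∑ i, (hfin.toFinset.filter fun δ => v i < δ).card) -
      (hfin.toFinset.filter fun δ => (∑ i, a i * v i) < δ).card := by
    rw [← hdd]
    omega
  have hcard2 : Cardinal.mk (Fin ((∑ i, (hfin.toFinset.filter fun δ => v i < δ).card) -
      (hfin.toFinset.filter fun δ => (∑ i, a i * v i) < δ).card) → ℂ) =
      Cardinal.continuum := by
    rw [← Cardinal.power_def ℂ, Cardinal.mk_fin, mk_complex]
    exact Cardinal.power_nat_eq Cardinal.aleph0_le_continuum hN1
  exact Cardinal.eq.mp (hcard1.trans hcard2.symm)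
end
end
end
end
end
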